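/- arXiv:2510.27402 — 10 statements merged into one kernel-verified Lean document; each statement's English description precedes it below -/
import Mathlib

section
/- Let m : ℤ → M be moments and (P_n)_{n≥0} a family of monic matrix polynomials, P_n(λ) = λ^n I + Σ_{j=0}^{n−1} γ_{n,j} λ^j, such that for every n ≥ 0 one has ⟨P_n, λ^i⟩ = 0 for all 0 ≤ i ≤ n−1, and such that H_n := ⟨P_n, λ^n⟩ and τ_n := ⟨P_n, λ^{−1}⟩ are invertible matrices for every n ≥ 0. Then for every n ≥ 1, setting a_n := −τ_n τ_{n−1}^{−1} and b_n := a_n H_{n−1} H_n^{−1}, the three-term recurrence λ(P_n(λ) + a_n P_{n−1}(λ)) = P_{n+1}(λ) + b_n P_n(λ) holds as an identity of matrix polynomials, i.e. for every j one has γ_{n,j−1} + a_n γ_{n−1,j−1} = γ_{n+1,j} + b_n γ_{n,j}, with the conventions γ_{k,k} = I and γ_{k,j} = 0 for j < 0 or j > k. -/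
/-- The pairing `⟨P_n, λ^i⟩ = Σ_{j=0}^{n} γ_{n,j} m_{j-i}` of the `n`-th monic matrix
polynomial (with coefficients `γ n j`, `γ n n = I`) with `λ^i`. -/
noncomputable def lauPairing (p : ℕ) (m : ℤ → Matrix (Fin p) (Fin p) ℝ)
    (γ : ℕ → ℤ → Matrix (Fin p) (Fin p) ℝ) (n : ℕ) (i : ℤ) : Matrix (Fin p) (Fin p) ℝ :=
  ∑ j ∈ Finset.range (n + 1), γ n (j : ℤ) * m ((j : ℤ) - i)

/-- `H_n := ⟨P_n, λ^n⟩`. -/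
noncomputable def lauH (p : ℕ) (m : ℤ → Matrix (Fin p) (Fin p) ℝ)
    (γ : ℕ → ℤ → Matrix (Fin p) (Fin p) ℝ) (n : ℕ) : Matrix (Fin p) (Fin p) ℝ :=
  lauPairing p m γ n (n : ℤ)

/-- `τ_n := ⟨P_n, λ^{-1}⟩`. -/
noncomputable def lauTau (p : ℕ) (m : ℤ → Matrix (Fin p) (Fin p) ℝ)
    (γ : ℕ → ℤ → Matrix (Fin p) (Fin p) ℝ) (n : ℕ) : Matrix (Fin p) (Fin p) ℝ :=
  lauPairing p m γ n (-1)

/-- `a_n := -τ_n τ_{n-1}⁻¹`. -/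
noncomputable def lauA (p : ℕ) (m : ℤ → Matrix (Fin p) (Fin p) ℝ)
    (γ : ℕ → ℤ → Matrix (Fin p) (Fin p) ℝ) (n : ℕ) : Matrix (Fin p) (Fin p) ℝ :=
  -(lauTau p m γ n) * (lauTau p m γ (n - 1))⁻¹

/-- `b_n := a_n H_{n-1} H_n⁻¹`. -/
noncomputable def lauB (p : ℕ) (m : ℤ → Matrix (Fin p) (Fin p) ℝ)
    (γ : ℕ → ℤ → Matrix (Fin p) (Fin p) ℝ) (n : ℕ) : Matrix (Fin p) (Fin p) ℝ :=
  lauA p m γ n * lauH p m γ (n - 1) * (lauH p m γ n)⁻¹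

/-!
Put `Q(λ) := λ(P_n + a_n P_{n-1}) - P_{n+1} - b_n P_n`. The leading terms cancel, so `deg Q ≤ n`,
and `⟨Q, λ^i⟩ = 0` for `0 ≤ i ≤ n`: for `0 < i < n` every term vanishes by orthogonality, while
`a_n` is chosen to kill `⟨Q, 1⟩ = τ_n + a_n τ_{n-1}` and `b_n` to kill
`⟨Q, λ^n⟩ = a_n H_{n-1} - b_n H_n`. A polynomial of degree `≤ d` orthogonal to `1, …, λ^d` is
zero: subtracting its leading coefficient times `P_d` lowers the degree without affecting the
orthogonality, and then pairing with `λ^d` shows the leading coefficient times `H_d` is zero.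
-/

open Finset Function

section MomentPairing

variable {R : Type*} [Ring R]

/-- The pairing `⟨Σ_j δ_j λ^j, λ^i⟩ = Σ_j δ_j m_{j-i}`, with the sum truncated to `0 ≤ j < N`. -/
def momentPairing (m : ℤ → R) (N : ℕ) (i : ℤ) : (ℤ → R) →ₗ[R] R where
  toFun δ := ∑ j ∈ range N, δ j * m (j - i)
  map_add' δ ε := by simp only [Pi.add_apply, add_mul, sum_add_distrib]
  map_smul' c δ := by simp only [Pi.smul_apply, smul_eq_mul, mul_assoc, mul_sum, RingHom.id_apply]

variable (m : ℤ → R)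

theorem momentPairing_apply (N : ℕ) (i : ℤ) (δ : ℤ → R) :
    momentPairing m N i δ = ∑ j ∈ range N, δ j * m (j - i) :=
  rfl

theorem momentPairing_succ_of_eq_zero {N : ℕ} {δ : ℤ → R} (h : δ N = 0) (i : ℤ) :
    momentPairing m (N + 1) i δ = momentPairing m N i δ := by
  simp [momentPairing_apply, sum_range_succ, h]

theorem momentPairing_shift {N : ℕ} {δ : ℤ → R} (h : δ (-1) = 0) (i : ℤ) :
    momentPairing m (N + 1) i (fun j => δ (j - 1)) = momentPairing m N (i - 1) δ := by
  simp only [momentPairing_apply, sum_range_succ', Nat.cast_zero, zero_sub, h, zero_mul, add_zero]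
  refine sum_congr rfl fun j _ => ?_
  push_cast
  ring_nf

theorem eq_zero_of_momentPairing_eq_zero (γ : ℕ → ℤ → R) (hmonic : ∀ k : ℕ, γ k k = 1)
    (hsupp : ∀ k : ℕ, support (γ k) ⊆ Set.Ico 0 ((k + 1 : ℕ) : ℤ))
    (horth : ∀ k i : ℕ, i < k → momentPairing m (k + 1) i (γ k) = 0)
    (hH : ∀ k : ℕ, IsUnit (momentPairing m (k + 1) k (γ k))) :
    ∀ (d : ℕ) (δ : ℤ → R), support δ ⊆ Set.Ico 0 d →
      (∀ i : ℕ, i < d → momentPairing m d i δ = 0) → δ = 0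
  | 0, δ, hδ, _ => support_eq_empty_iff.mp (by simpa using hδ)
  | d + 1, δ, hδ, hδorth => by
    set δ' := δ - δ d • γ d with hδ'
    have hδ'd : δ' d = 0 := by simp [δ', hmonic]
    have hδ'supp : support δ' ⊆ Set.Ico 0 d := by
      refine support_subset_iff'.mpr fun j hj => ?_
      by_cases hjd : j = d
      · rw [hjd, hδ'd]
      have hj' : j ∉ Set.Ico 0 ((d : ℤ) + 1) := by
        simp only [Set.mem_Ico, not_and, not_lt] at hj ⊢; omega
      have hγj : γ d j = 0 := notMem_support.mp fun h => hj' (by exact_mod_cast hsupp d h)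
      have hδj : δ j = 0 := notMem_support.mp fun h => hj' (by exact_mod_cast hδ h)
      simp [δ', hγj, hδj]
    have hδ'orth : ∀ i : ℕ, i < d → momentPairing m d i δ' = 0 := fun i hi => by
      rw [← momentPairing_succ_of_eq_zero m hδ'd, hδ', map_sub, map_smul, hδorth i (by omega),
        horth d i hi, smul_zero, sub_zero]
    have hδ_eq : δ = δ d • γ d :=
      sub_eq_zero.mp (eq_zero_of_momentPairing_eq_zero γ hmonic hsupp horth hH d δ' hδ'supp hδ'orth)
    have hlead : δ d * momentPairing m (d + 1) d (γ d) = 0 := by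
      rw [← smul_eq_mul, ← map_smul, ← hδ_eq]
      exact hδorth d d.lt_succ_self
    rw [hδ_eq, (hH d).mul_left_eq_zero.mp hlead, zero_smul]

end MomentPairing

section Recurrence

variable {p : ℕ} (m : ℤ → Matrix (Fin p) (Fin p) ℝ) (γ : ℕ → ℤ → Matrix (Fin p) (Fin p) ℝ)

/-- The coefficients of `λ(P_n + a_n P_{n-1}) - (P_{n+1} + b_n P_n)`. -/
noncomputable def recurrenceResidual (n : ℕ) : ℤ → Matrix (Fin p) (Fin p) ℝ :=
  (fun j => γ n (j - 1)) + lauA p m γ n • (fun j => γ (n - 1) (j - 1)) -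
    (γ (n + 1) + lauB p m γ n • γ n)

variable {m γ}

theorem support_recurrenceResidual_subset (hmonic : ∀ k : ℕ, γ k (k : ℤ) = 1)
    (hlow : ∀ (k : ℕ) (j : ℤ), j < 0 → γ k j = 0)
    (hhigh : ∀ (k : ℕ) (j : ℤ), (k : ℤ) < j → γ k j = 0) {n : ℕ} (hn : 1 ≤ n) :
    support (recurrenceResidual m γ n) ⊆ Set.Ico 0 ((n + 1 : ℕ) : ℤ) := by
  refine support_subset_iff'.mpr fun j hj => ?_
  simp only [Set.mem_Ico, not_and_or, not_le, not_lt] at hj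
  rcases hj with hj | hj
  · simp [recurrenceResidual, hlow _ _ hj, hlow _ (j - 1) (by omega)]
  rcases hj.eq_or_lt with rfl | hj
  · have hnext := hmonic (n + 1)
    simp only [recurrenceResidual, Nat.cast_add, Nat.cast_one] at hnext ⊢
    simp [hmonic, hnext, hhigh (n - 1) n (by omega), hhigh n (n + 1) (by omega)]
  · simp [recurrenceResidual, hhigh n (j - 1) (by omega), hhigh (n - 1) (j - 1) (by omega),
      hhigh (n + 1) j (by push_cast at hj ⊢; omega), hhigh n j (by push_cast at hj ⊢; omega)]

theorem momentPairing_recurrenceResidual (hlow : ∀ (k : ℕ) (j : ℤ), j < 0 → γ k j = 0)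
    (hhigh : ∀ (k : ℕ) (j : ℤ), (k : ℤ) < j → γ k j = 0) (k : ℕ) (i : ℤ) :
    momentPairing m (k + 3) i (recurrenceResidual m γ (k + 1)) =
      lauPairing p m γ (k + 1) (i - 1) + lauA p m γ (k + 1) * lauPairing p m γ k (i - 1) -
        (lauPairing p m γ (k + 2) i + lauB p m γ (k + 1) * lauPairing p m γ (k + 1) i) := by
  have hk : γ k (k + 1 : ℕ) = 0 := hhigh k _ (by omega)
  have hk1 : γ (k + 1) (k + 2 : ℕ) = 0 := hhigh (k + 1) _ (by omega)
  rw [recurrenceResidual, Nat.add_sub_cancel, map_sub, map_add, map_add, map_smul, map_smul,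
    momentPairing_shift m (hlow _ _ (by omega)), momentPairing_shift m (hlow _ _ (by omega)),
    momentPairing_succ_of_eq_zero m hk, momentPairing_succ_of_eq_zero m hk1]
  rfl

theorem momentPairing_recurrenceResidual_eq_zero
    (hlow : ∀ (k : ℕ) (j : ℤ), j < 0 → γ k j = 0)
    (hhigh : ∀ (k : ℕ) (j : ℤ), (k : ℤ) < j → γ k j = 0)
    (horth : ∀ (n : ℕ) (i : ℕ), i < n → lauPairing p m γ n (i : ℤ) = 0)
    (hH : ∀ n : ℕ, IsUnit (lauH p m γ n)) (hτ : ∀ n : ℕ, IsUnit (lauTau p m γ n))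
    (k : ℕ) {i : ℕ} (hi : i ≤ k + 1) :
    momentPairing m (k + 3) i (recurrenceResidual m γ (k + 1)) = 0 := by
  rw [momentPairing_recurrenceResidual hlow hhigh]
  rcases i with _ | i
  · have hτk : (lauTau p m γ k)⁻¹ * lauTau p m γ k = 1 :=
      Matrix.nonsing_inv_mul _ ((Matrix.isUnit_iff_isUnit_det _).mp (hτ k))
    have hA : lauA p m γ (k + 1) * lauTau p m γ k = -lauTau p m γ (k + 1) := by
      rw [lauA, Nat.add_sub_cancel, mul_assoc, hτk, mul_one]
    have h₁ := horth (k + 1) 0 (by omega)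
    have h₂ := horth (k + 2) 0 (by omega)
    rw [Nat.cast_zero] at h₁ h₂ ⊢
    rw [zero_sub, ← lauTau, ← lauTau, hA, h₁, h₂]
    simp
  rw [Nat.cast_add_one, add_sub_cancel_right]
  have h₁ := horth (k + 2) (i + 1) (by omega)
  rw [Nat.cast_add_one] at h₁
  rcases Nat.lt_or_ge i k with hik | hik
  · have h₂ := horth (k + 1) (i + 1) (by omega)
    rw [Nat.cast_add_one] at h₂
    simp [horth (k + 1) i (by omega), horth k i hik, h₁, h₂]
  · obtain rfl : i = k := by omega
    have hHk : (lauH p m γ (i + 1))⁻¹ * lauH p m γ (i + 1) = 1 :=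
      Matrix.nonsing_inv_mul _ ((Matrix.isUnit_iff_isUnit_det _).mp (hH (i + 1)))
    have hB : lauB p m γ (i + 1) * lauH p m γ (i + 1) = lauA p m γ (i + 1) * lauH p m γ i := by
      rw [lauB, Nat.add_sub_cancel, mul_assoc, hHk, mul_one]
    rw [horth (i + 1) i (by omega), h₁, ← Nat.cast_add_one, ← lauH, ← lauH, hB]
    simp

end Recurrence

theorem statement0_general {p : ℕ}
    (m : ℤ → Matrix (Fin p) (Fin p) ℝ)
    (γ : ℕ → ℤ → Matrix (Fin p) (Fin p) ℝ)
    (hmonic : ∀ k : ℕ, γ k (k : ℤ) = 1)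
    (hlow : ∀ (k : ℕ) (j : ℤ), j < 0 → γ k j = 0)
    (hhigh : ∀ (k : ℕ) (j : ℤ), (k : ℤ) < j → γ k j = 0)
    (horth : ∀ (n : ℕ) (i : ℕ), i < n → lauPairing p m γ n (i : ℤ) = 0)
    (hH : ∀ n : ℕ, IsUnit (lauH p m γ n))
    (hτ : ∀ n : ℕ, IsUnit (lauTau p m γ n)) :
    ∀ n : ℕ, 1 ≤ n → ∀ j : ℤ,
      γ n (j - 1) + lauA p m γ n * γ (n - 1) (j - 1) =
        γ (n + 1) j + lauB p m γ n * γ n j := by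
  intro n hn j
  have hsupp (k : ℕ) : support (γ k) ⊆ Set.Ico 0 ((k + 1 : ℕ) : ℤ) := by
    refine support_subset_iff'.mpr fun j hj => ?_
    simp only [Set.mem_Ico, not_and_or, not_le, not_lt] at hj
    rcases hj with hj | hj
    exacts [hlow k j hj, hhigh k j (by push_cast at hj; omega)]
  obtain ⟨k, rfl⟩ := Nat.exists_eq_add_of_le' hn
  have hres_supp := support_recurrenceResidual_subset (m := m) hmonic hlow hhigh hn
  have hres_top : recurrenceResidual m γ (k + 1) (k + 2 : ℕ) = 0 :=
    notMem_support.mp fun h => by simpa using hres_supp h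
  have hres := eq_zero_of_momentPairing_eq_zero m γ hmonic hsupp horth hH (k + 2) _ hres_supp
    fun i hi => by
      rw [← momentPairing_succ_of_eq_zero m hres_top]
      exact momentPairing_recurrenceResidual_eq_zero hlow hhigh horth hH hτ k (by omega)
  exact sub_eq_zero.mp (congrFun hres j)

/-- the three-term recurrence
`λ(P_n + a_n P_{n-1}) = P_{n+1} + b_n P_n` as an identity of coefficients. -/
theorem statement0 {p : ℕ} (hp : 1 ≤ p)
    (m : ℤ → Matrix (Fin p) (Fin p) ℝ)
    (γ : ℕ → ℤ → Matrix (Fin p) (Fin p) ℝ)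
    (hmonic : ∀ k : ℕ, γ k (k : ℤ) = 1)
    (hlow : ∀ (k : ℕ) (j : ℤ), j < 0 → γ k j = 0)
    (hhigh : ∀ (k : ℕ) (j : ℤ), (k : ℤ) < j → γ k j = 0)
    (horth : ∀ (n : ℕ) (i : ℕ), i < n → lauPairing p m γ n (i : ℤ) = 0)
    (hH : ∀ n : ℕ, IsUnit (lauH p m γ n))
    (hτ : ∀ n : ℕ, IsUnit (lauTau p m γ n)) :
    ∀ n : ℕ, 1 ≤ n → ∀ j : ℤ,
      γ n (j - 1) + lauA p m γ n * γ (n - 1) (j - 1) =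
        γ (n + 1) j + lauB p m γ n * γ n j :=
  statement0_general m γ hmonic hlow hhigh horth hH hτ
end

section
/- Let m : ℤ → M be moments, let n ≥ 1, and assume the block moment matrix Λ_{n−1} is invertible as an (np)×(np) real matrix. Define γ_{n,j} := −(θ_n Λ_{n−1}^{−1})_j for 0 ≤ j ≤ n−1, the j-th p×p block of the p×(np) matrix θ_n Λ_{n−1}^{−1}, and set P_n(λ) := λ^n I + Σ_{j=0}^{n−1} γ_{n,j} λ^j. Then ⟨P_n, λ^i⟩ = 0 for every 0 ≤ i ≤ n−1; that is, the quasideterminant (Schur-complement) expression for the Laurent biorthogonal polynomial P_n is orthogonal to 1, λ, …, λ^{n−1}. -/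
/-- The block moment matrix `Λ_{n-1}` whose `(k,l)` block is `m_{k-l}`,
regarded as an `(np)×(np)` real matrix. -/
noncomputable def blockLam (p n : ℕ) (m : ℤ → Matrix (Fin p) (Fin p) ℝ) :
    Matrix (Fin n × Fin p) (Fin n × Fin p) ℝ :=
  Matrix.of fun kx ly => m ((kx.1 : ℤ) - (ly.1 : ℤ)) kx.2 ly.2

/-- The block row `θ_n = (m_n, m_{n-1}, …, m_1)`, a `p×(np)` real matrix. -/
noncomputable def blockTheta (p n : ℕ) (m : ℤ → Matrix (Fin p) (Fin p) ℝ) :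
    Matrix (Fin p) (Fin n × Fin p) ℝ :=
  Matrix.of fun x jy => m ((n : ℤ) - (jy.1 : ℤ)) x jy.2

/-- The block column `col(m_r, …, m_{r+n-1})`, an `(np)×p` real matrix. -/
noncomputable def blockCol (p n : ℕ) (r : ℤ) (m : ℤ → Matrix (Fin p) (Fin p) ℝ) :
    Matrix (Fin n × Fin p) (Fin p) ℝ :=
  Matrix.of fun jx y => m (r + (jx.1 : ℤ)) jx.2 y

/-- `γ_{n,j} := -(θ_n Λ_{n-1}⁻¹)_j`, the negative of the `j`-th `p×p` block of the
`p×(np)` matrix `θ_n Λ_{n-1}⁻¹`. -/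
noncomputable def gammaQD (p n : ℕ) (m : ℤ → Matrix (Fin p) (Fin p) ℝ) (j : Fin n) :
    Matrix (Fin p) (Fin p) ℝ :=
  Matrix.of fun x y => -((blockTheta p n m * (blockLam p n m)⁻¹) x (j, y))

theorem Matrix.submatrix_mul_eq_sum_blocks {R l ι κ o o' : Type*} [NonUnitalNonAssocSemiring R]
    [Fintype ι] [Fintype o] (X : Matrix l (ι × o) R) (Y : Matrix (ι × o) (κ × o') R) (k : κ) :
    (X * Y).submatrix id (k, ·) = ∑ j, X.submatrix id (j, ·) * Y.submatrix (j, ·) (k, ·) := by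
  ext a b
  simp only [Matrix.mul_apply, Fintype.sum_prod_type, Matrix.submatrix_apply, Matrix.sum_apply,
    id_eq]

section Blocks

variable {p n : ℕ} (m : ℤ → Matrix (Fin p) (Fin p) ℝ)

theorem blockLam_submatrix (j k : Fin n) :
    (blockLam p n m).submatrix (j, ·) (k, ·) = m ((j : ℤ) - (k : ℤ)) := rfl

theorem blockTheta_submatrix (k : Fin n) :
    (blockTheta p n m).submatrix id (k, ·) = m ((n : ℤ) - (k : ℤ)) := rfl

theorem gammaQD_eq_neg_submatrix (j : Fin n) :
    gammaQD p n m j = -(blockTheta p n m * (blockLam p n m)⁻¹).submatrix id (j, ·) := rfl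

end Blocks

theorem statement1_general {p : ℕ}
    (m : ℤ → Matrix (Fin p) (Fin p) ℝ)
    (n : ℕ)
    (hΛ : IsUnit (blockLam p n m)) :
    ∀ i : ℕ, i < n →
      m ((n : ℤ) - (i : ℤ)) + ∑ j : Fin n, gammaQD p n m j * m ((j : ℤ) - (i : ℤ)) = 0 := by
  intro i hi
  -- The `i`-th block column of `θ_n Λ⁻¹ Λ = θ_n` is the orthogonality relation.
  have hcancel := congrArg (·.submatrix id ((⟨i, hi⟩ : Fin n), ·))
    (Matrix.nonsing_inv_mul_cancel_right (blockLam p n m) (blockTheta p n m)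
      ((Matrix.isUnit_iff_isUnit_det _).mp hΛ))
  rw [Matrix.submatrix_mul_eq_sum_blocks] at hcancel
  simp only [blockLam_submatrix, blockTheta_submatrix] at hcancel
  simp only [gammaQD_eq_neg_submatrix, Matrix.neg_mul, Finset.sum_neg_distrib, hcancel,
    add_neg_cancel]

/-- the Schur-complement (quasideterminant) polynomial
`P_n(λ) = λ^n I + Σ_{j<n} γ_{n,j} λ^j` satisfies `⟨P_n, λ^i⟩ = 0` for `0 ≤ i ≤ n-1`. -/
theorem statement1 {p : ℕ} (hp : 1 ≤ p)
    (m : ℤ → Matrix (Fin p) (Fin p) ℝ)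
    (n : ℕ) (hn : 1 ≤ n)
    (hΛ : IsUnit (blockLam p n m)) :
    ∀ i : ℕ, i < n →
      m ((n : ℤ) - (i : ℤ)) + ∑ j : Fin n, gammaQD p n m j * m ((j : ℤ) - (i : ℤ)) = 0 :=
  statement1_general m n hΛ
end

section
/- Let m : ℤ → M be moments, let n ≥ 1, and assume the block moment matrix Λ_{n−1} is invertible as an (np)×(np) real matrix. If P_n(λ) = λ^n I + Σ_{j=0}^{n−1} γ_{n,j} λ^j is a monic matrix polynomial satisfying ⟨P_n, λ^i⟩ = 0 for all 0 ≤ i ≤ n−1, then its coefficients are uniquely determined and given by the Schur-complement (quasideterminant) formula γ_{n,j} = −(θ_n Λ_{n−1}^{−1})_j, the negative of the j-th p×p block of the p×(np) matrix θ_n Λ_{n−1}^{−1}. -/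
/-- The `j`-th `p×p` block of the `p×(np)` matrix `θ_n Λ_{n-1}⁻¹`. -/
noncomputable def thetaLamInvBlock (p n : ℕ) (m : ℤ → Matrix (Fin p) (Fin p) ℝ) (j : Fin n) :
    Matrix (Fin p) (Fin p) ℝ :=
  Matrix.of fun x y => (blockTheta p n m * (blockLam p n m)⁻¹) x (j, y)

/-! The orthogonality conditions `⟨P_n, λ^i⟩ = 0`, `0 ≤ i < n`, are exactly the block linear
system `θ_n + Γ Λ_{n-1} = 0`, where `Γ = (γ_{n,0}, …, γ_{n,n-1})` is the block row of the
lower coefficients; inverting `Λ_{n-1}` gives `Γ = -θ_n Λ_{n-1}⁻¹`. -/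

def coeffRow {R : Type*} {p n : ℕ} (γ : Fin n → Matrix (Fin p) (Fin p) R) :
    Matrix (Fin p) (Fin n × Fin p) R :=
  Matrix.of fun x jy => γ jy.1 x jy.2

lemma coeffRow_mul_blockLam_apply {p n : ℕ} (m : ℤ → Matrix (Fin p) (Fin p) ℝ)
    (γ : Fin n → Matrix (Fin p) (Fin p) ℝ) (x y : Fin p) (i : Fin n) :
    (coeffRow γ * blockLam p n m) x (i, y) = (∑ j : Fin n, γ j * m ((j : ℤ) - (i : ℤ))) x y := by
  simp only [Matrix.mul_apply, Fintype.sum_prod_type, Matrix.sum_apply, coeffRow, blockLam,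
    Matrix.of_apply]

lemma blockTheta_add_coeffRow_mul_blockLam_eq_zero {p n : ℕ} (m : ℤ → Matrix (Fin p) (Fin p) ℝ)
    (γ : Fin n → Matrix (Fin p) (Fin p) ℝ)
    (horth : ∀ i : ℕ, i < n →
      m ((n : ℤ) - (i : ℤ)) + ∑ j : Fin n, γ j * m ((j : ℤ) - (i : ℤ)) = 0) :
    blockTheta p n m + coeffRow γ * blockLam p n m = 0 := by
  ext x ⟨i, y⟩
  rw [Matrix.add_apply, coeffRow_mul_blockLam_apply]
  simpa only [blockTheta, Matrix.of_apply, Matrix.add_apply, Matrix.zero_apply]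
    using congrFun (congrFun (horth i i.isLt) x) y

lemma eq_neg_mul_nonsing_inv_of_add_mul_eq_zero {R ι κ : Type*} [CommRing R] [Fintype ι]
    [DecidableEq ι] {A G : Matrix κ ι R} {Λ : Matrix ι ι R} (hΛ : IsUnit Λ)
    (h : A + G * Λ = 0) :
    G = -(A * Λ⁻¹) := by
  have hdet : IsUnit Λ.det := (Matrix.isUnit_iff_isUnit_det Λ).mp hΛ
  rw [← Matrix.neg_mul, ← eq_neg_of_add_eq_zero_right h,
    Matrix.mul_nonsing_inv_cancel_right Λ G hdet]

theorem statement3_general {p : ℕ}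
    (m : ℤ → Matrix (Fin p) (Fin p) ℝ)
    (n : ℕ)
    (hΛ : IsUnit (blockLam p n m))
    (γ : Fin n → Matrix (Fin p) (Fin p) ℝ)
    (horth : ∀ i : ℕ, i < n →
      m ((n : ℤ) - (i : ℤ)) + ∑ j : Fin n, γ j * m ((j : ℤ) - (i : ℤ)) = 0) :
    ∀ j : Fin n, γ j = -(thetaLamInvBlock p n m j) := by
  have hΓ : coeffRow γ = -(blockTheta p n m * (blockLam p n m)⁻¹) :=
    eq_neg_mul_nonsing_inv_of_add_mul_eq_zero hΛ
      (blockTheta_add_coeffRow_mul_blockLam_eq_zero m γ horth)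
  intro j
  ext x y
  exact congrFun (congrFun hΓ x) (j, y)

/-- if a monic matrix polynomial `P_n(λ) = λ^n I + Σ_{j<n} γ_j λ^j`
satisfies `⟨P_n, λ^i⟩ = 0` for all `0 ≤ i ≤ n-1` and `Λ_{n-1}` is invertible, then
its coefficients are uniquely given by `γ_j = -(θ_n Λ_{n-1}⁻¹)_j`. -/
theorem statement3 {p : ℕ} (hp : 1 ≤ p)
    (m : ℤ → Matrix (Fin p) (Fin p) ℝ)
    (n : ℕ) (hn : 1 ≤ n)
    (hΛ : IsUnit (blockLam p n m))
    (γ : Fin n → Matrix (Fin p) (Fin p) ℝ)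
    (horth : ∀ i : ℕ, i < n →
      m ((n : ℤ) - (i : ℤ)) + ∑ j : Fin n, γ j * m ((j : ℤ) - (i : ℤ)) = 0) :
    ∀ j : Fin n, γ j = -(thetaLamInvBlock p n m j) :=
  statement3_general m n hΛ γ horth
end

section
/- Let α₀, α₁, α₂ ∈ ℝ. Let m_j : ℝ → M (j ∈ ℤ) be differentiable moments satisfying m_j′(t) = α₀ j m_j(t) + α₁ m_{j+1}(t) + α₂ m_{j−1}(t) for all j and t. Let (P_n(·,t))_{n≥0} be monic matrix polynomials P_n(λ,t) = λ^n I + Σ_{j=0}^{n−1} γ_{n,j}(t) λ^j with differentiable coefficients, satisfying for every n and t the orthogonality ⟨P_n(·,t), λ^i⟩_t = 0 for 0 ≤ i ≤ n−1, and assume H_n(t) := ⟨P_n(·,t), λ^n⟩_t and τ_n(t) := ⟨P_n(·,t), λ^{−1}⟩_t are invertible for all n, t. Set a_n := −τ_n τ_{n−1}^{−1} and b_n := a_n H_{n−1} H_n^{−1}. Define the total-derivative polynomial (DP_n)(λ,t) := Σ_{j=0}^{n} (γ_{n,j}′(t) + j α₀ γ_{n,j}(t)) λ^j (with γ_{n,n}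 = I). Then for every n ≥ 1 and t, DP_n = n α₀ P_n + α₁ a_n (λ P_{n−1} − P_n) − α₂ b_n^{−1} a_n P_{n−1}, as an identity of matrix polynomials in λ. -/
/-!
Differentiating the orthogonality relations `⟨P_n, λ^i⟩_t = 0` along the moment flow gives
`⟨DP_n, λ^i⟩ = -α₁ ⟨P_n, λ^{i-1}⟩ - α₂ ⟨P_n, λ^{i+1}⟩` for `i < n`. The defect
`DP_n - (nα₀ P_n + α₁ a_n (λ P_{n-1} - P_n) - α₂ b_n⁻¹ a_n P_{n-1})` has degree `< n`, since both
sides have leading coefficient `nα₀`, and the identities `a_n τ_{n-1} = -τ_n` and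
`b_n⁻¹ a_n H_{n-1} = H_n` make its pairings with `λ^0, …, λ^{n-1}` vanish. A polynomial of degree
`< k` orthogonal to `λ^0, …, λ^{k-1}` is zero as soon as the `H_j` are invertible: subtracting
the right multiple of the monic `P_{k-1}` lowers the degree, and the multiple itself is then
killed by pairing with `λ^{k-1}`.
-/

/-- The time-dependent pairing `⟨P_n(·,t), λ^i⟩_t = Σ_{j=0}^{n} γ_{n,j}(t) m_{j-i}(t)`. -/
noncomputable def lauPairingT (p : ℕ) (m : ℤ → ℝ → Matrix (Fin p) (Fin p) ℝ)
    (γ : ℕ → ℤ → ℝ → Matrix (Fin p) (Fin p) ℝ) (n : ℕ) (i : ℤ) (t : ℝ) :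
    Matrix (Fin p) (Fin p) ℝ :=
  ∑ j ∈ Finset.range (n + 1), γ n (j : ℤ) t * m ((j : ℤ) - i) t

/-- `H_n(t) := ⟨P_n(·,t), λ^n⟩_t`. -/
noncomputable def lauHT (p : ℕ) (m : ℤ → ℝ → Matrix (Fin p) (Fin p) ℝ)
    (γ : ℕ → ℤ → ℝ → Matrix (Fin p) (Fin p) ℝ) (n : ℕ) (t : ℝ) :
    Matrix (Fin p) (Fin p) ℝ :=
  lauPairingT p m γ n (n : ℤ) t

/-- `τ_n(t) := ⟨P_n(·,t), λ^{-1}⟩_t`. -/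
noncomputable def lauTauT (p : ℕ) (m : ℤ → ℝ → Matrix (Fin p) (Fin p) ℝ)
    (γ : ℕ → ℤ → ℝ → Matrix (Fin p) (Fin p) ℝ) (n : ℕ) (t : ℝ) :
    Matrix (Fin p) (Fin p) ℝ :=
  lauPairingT p m γ n (-1) t

/-- `a_n(t) := -τ_n(t) τ_{n-1}(t)⁻¹`. -/
noncomputable def lauAT (p : ℕ) (m : ℤ → ℝ → Matrix (Fin p) (Fin p) ℝ)
    (γ : ℕ → ℤ → ℝ → Matrix (Fin p) (Fin p) ℝ) (n : ℕ) (t : ℝ) :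
    Matrix (Fin p) (Fin p) ℝ :=
  -(lauTauT p m γ n t) * (lauTauT p m γ (n - 1) t)⁻¹

/-- `b_n(t) := a_n(t) H_{n-1}(t) H_n(t)⁻¹`. -/
noncomputable def lauBT (p : ℕ) (m : ℤ → ℝ → Matrix (Fin p) (Fin p) ℝ)
    (γ : ℕ → ℤ → ℝ → Matrix (Fin p) (Fin p) ℝ) (n : ℕ) (t : ℝ) :
    Matrix (Fin p) (Fin p) ℝ :=
  lauAT p m γ n t * lauHT p m γ (n - 1) t * (lauHT p m γ n t)⁻¹

open Finset

theorem Matrix.hasDerivAt_sum_mul_apply {ι κ ν α : Type*} [Fintype κ] (S : Finset α)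
    {A : α → ℝ → Matrix ι κ ℝ} {B : α → ℝ → Matrix κ ν ℝ} {A' : α → Matrix ι κ ℝ}
    {B' : α → Matrix κ ν ℝ} {t : ℝ}
    (hA : ∀ a x y, HasDerivAt (fun s => A a s x y) (A' a x y) t)
    (hB : ∀ a x y, HasDerivAt (fun s => B a s x y) (B' a x y) t) (x : ι) (z : ν) :
    HasDerivAt (fun s => (∑ a ∈ S, A a s * B a s) x z)
      ((∑ a ∈ S, (A' a * B a t + A a t * B' a)) x z) t := by
  simp only [Matrix.sum_apply, Matrix.add_apply, Matrix.mul_apply, ← sum_add_distrib]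
  exact HasDerivAt.fun_sum fun a _ => HasDerivAt.fun_sum fun y _ => (hA a x y).mul (hB a y z)

theorem Matrix.eq_zero_of_hasDerivAt_apply_of_forall_eq {ι κ : Type*} {F : ℝ → Matrix ι κ ℝ}
    {F' C : Matrix ι κ ℝ} {t : ℝ} (hF : ∀ x y, HasDerivAt (fun s => F s x y) (F' x y) t)
    (hC : ∀ s, F s = C) : F' = 0 := by
  ext x y
  rw [Matrix.zero_apply]
  exact (hF x y).unique (by simpa only [hC] using hasDerivAt_const t (C x y))

namespace LaurentBiorthogonal

section Pairing

variable {R : Type*} [Ring R]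

/-- `pairing μ N c i = ⟨Σ_{j<N} c_j λ^j, λ^i⟩` for the moment sequence `μ`. -/
def pairing (μ : ℤ → R) (N : ℕ) (c : ℤ → R) (i : ℤ) : R :=
  ∑ j ∈ range N, c j * μ (j - i)

variable (μ : ℤ → R) (N : ℕ) (i : ℤ)

theorem pairing_add (c d : ℤ → R) :
    pairing μ N (fun j => c j + d j) i = pairing μ N c i + pairing μ N d i := by
  simp only [pairing, add_mul, sum_add_distrib]

theorem pairing_sub (c d : ℤ → R) :
    pairing μ N (fun j => c j - d j) i = pairing μ N c i - pairing μ N d i := by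
  simp only [pairing, sub_mul, sum_sub_distrib]

theorem pairing_mul_left (A : R) (c : ℤ → R) :
    pairing μ N (fun j => A * c j) i = A * pairing μ N c i := by
  simp only [pairing, mul_sum, mul_assoc]

theorem pairing_smul {S : Type*} [Monoid S] [DistribMulAction S R] [IsScalarTower S R R]
    (r : S) (c : ℤ → R) : pairing μ N (fun j => r • c j) i = r • pairing μ N c i := by
  simp only [pairing, smul_sum, smul_mul_assoc]

theorem pairing_succ_of_eq_zero {c : ℤ → R} (hc : c N = 0) :
    pairing μ (N + 1) c i = pairing μ N c i := by
  rw [pairing, sum_range_succ, hc, zero_mul, add_zero, pairing]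

theorem pairing_succ_shift {c : ℤ → R} (hc : c (-1) = 0) :
    pairing μ (N + 1) (fun j => c (j - 1)) i = pairing μ N c (i - 1) := by
  rw [pairing, sum_range_succ', pairing]
  simp only [Nat.cast_add, Nat.cast_one, add_sub_cancel_right, Nat.cast_zero, zero_sub, hc,
    zero_mul, add_zero]
  exact sum_congr rfl fun j _ => by rw [sub_sub_eq_add_sub]

end Pairing

structure IsMonicOrthogonal {R : Type*} [Ring R] (μ : ℤ → R) (P : ℕ → ℤ → R) : Prop where
  coeff_self : ∀ n : ℕ, P n n = 1
  coeff_of_neg : ∀ (n : ℕ) (j : ℤ), j < 0 → P n j = 0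
  coeff_of_lt : ∀ (n : ℕ) (j : ℤ), (n : ℤ) < j → P n j = 0
  pairing_eq_zero : ∀ n i : ℕ, i < n → pairing μ (n + 1) (P n) i = 0

theorem IsMonicOrthogonal.eq_zero_of_pairing_eq_zero {R : Type*} [Ring R] {μ : ℤ → R}
    {P : ℕ → ℤ → R} (hP : IsMonicOrthogonal μ P)
    (hH : ∀ n : ℕ, IsUnit (pairing μ (n + 1) (P n) n)) {k : ℕ} {c : ℤ → R}
    (hc_neg : ∀ j : ℤ, j < 0 → c j = 0) (hc_ge : ∀ j : ℤ, k ≤ j → c j = 0)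
    (hc : ∀ i : ℕ, i < k → pairing μ k c i = 0) : c = 0 := by
  induction k generalizing c with
  | zero =>
    funext j
    rcases lt_or_ge j 0 with hj | hj
    exacts [hc_neg j hj, hc_ge j (by exact_mod_cast hj)]
  | succ k ih =>
    set r := c k
    have hlead : c k - r * P k k = 0 := by rw [hP.coeff_self, mul_one, sub_self]
    have hrest : (fun j => c j - r * P k j) = 0 := by
      refine ih (fun j hj => ?_) (fun j hj => ?_) (fun i hi => ?_)
      · rw [hc_neg j hj, hP.coeff_of_neg k j hj, mul_zero, sub_zero]
      · rcases hj.eq_or_lt with rfl | hj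
        · exact hlead
        · rw [hc_ge j (by omega), hP.coeff_of_lt k j hj, mul_zero, sub_zero]
      · rw [← pairing_succ_of_eq_zero _ _ _ hlead, pairing_sub, pairing_mul_left,
          hc i (by omega), hP.pairing_eq_zero k i hi, mul_zero, sub_zero]
    have hcP : c = fun j => r * P k j := funext fun j => sub_eq_zero.mp (congrFun hrest j)
    have hr : r * pairing μ (k + 1) (P k) k = 0 := by
      rw [← pairing_mul_left, ← hcP]
      exact hc k k.lt_succ_self
    rw [hcP, (hH k).mul_left_eq_zero.mp hr]
    funext j
    exact zero_mul _

section Evolution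

variable {p : ℕ} (m : ℤ → ℝ → Matrix (Fin p) (Fin p) ℝ)
  (γ γd : ℕ → ℤ → ℝ → Matrix (Fin p) (Fin p) ℝ) (α₀ α₁ α₂ : ℝ)

theorem lauPairingT_eq_pairing (n : ℕ) (i : ℤ) (t : ℝ) :
    lauPairingT p m γ n i t = pairing (m · t) (n + 1) (γ n · t) i := rfl

/-- The coefficients of `DP_n(·, t)`. -/
def totalDeriv (n : ℕ) (t : ℝ) (j : ℤ) : Matrix (Fin p) (Fin p) ℝ :=
  γd n j t + ((j : ℝ) * α₀) • γ n j t

/-- The coefficients of `DP_n - (nα₀ P_n + α₁ a_n (λ P_{n-1} - P_n) - α₂ b_n⁻¹ a_n P_{n-1})`. -/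
noncomputable def evolutionDefect (n : ℕ) (t : ℝ) : ℤ → Matrix (Fin p) (Fin p) ℝ := fun j =>
  totalDeriv γ γd α₀ n t j -
    (((n : ℝ) * α₀) • γ n j t + α₁ • (lauAT p m γ n t * (γ (n - 1) (j - 1) t - γ n j t))
      - α₂ • ((lauBT p m γ n t)⁻¹ * lauAT p m γ n t * γ (n - 1) j t))

theorem hasDerivAt_lauPairingT_apply
    (hm : ∀ (j : ℤ) (t : ℝ) (x y : Fin p), HasDerivAt (fun s => m j s x y)
      (((α₀ * (j : ℝ)) • m j t + α₁ • m (j + 1) t + α₂ • m (j - 1) t) x y) t)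
    (hγd : ∀ (n : ℕ) (j : ℤ) (t : ℝ) (x y : Fin p),
      HasDerivAt (fun s => γ n j s x y) (γd n j t x y) t)
    (n : ℕ) (i : ℤ) (t : ℝ) (x y : Fin p) :
    HasDerivAt (fun s => lauPairingT p m γ n i s x y)
      ((pairing (m · t) (n + 1) (totalDeriv γ γd α₀ n t) i
        - (α₀ * i) • lauPairingT p m γ n i t + α₁ • lauPairingT p m γ n (i - 1) t
        + α₂ • lauPairingT p m γ n (i + 1) t) x y) t := by
  refine (Matrix.hasDerivAt_sum_mul_apply (range (n + 1)) (A := fun j : ℕ => γ n j)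
    (B := fun j : ℕ => m (j - i)) (fun j => hγd n j t) (fun j => hm (j - i) t) x y).congr_deriv
    (congrFun (congrFun ?_ x) y)
  simp only [pairing, lauPairingT, totalDeriv, smul_sum, ← sum_sub_distrib, ← sum_add_distrib]
  refine sum_congr rfl fun j _ => ?_
  rw [show (j : ℤ) - (i - 1) = j - i + 1 by ring, show (j : ℤ) - (i + 1) = j - i - 1 by ring]
  push_cast
  simp only [add_mul, mul_add, smul_mul_assoc, mul_smul_comm]
  rw [mul_sub, sub_smul, mul_comm α₀ (j : ℝ)]
  abel

theorem pairing_totalDeriv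
    (hm : ∀ (j : ℤ) (t : ℝ) (x y : Fin p), HasDerivAt (fun s => m j s x y)
      (((α₀ * (j : ℝ)) • m j t + α₁ • m (j + 1) t + α₂ • m (j - 1) t) x y) t)
    (hγd : ∀ (n : ℕ) (j : ℤ) (t : ℝ) (x y : Fin p),
      HasDerivAt (fun s => γ n j s x y) (γd n j t x y) t)
    {n : ℕ} {i : ℤ} (horth : ∀ s, lauPairingT p m γ n i s = 0) (t : ℝ) :
    pairing (m · t) (n + 1) (totalDeriv γ γd α₀ n t) i =
      -α₁ • lauPairingT p m γ n (i - 1) t - α₂ • lauPairingT p m γ n (i + 1) t := by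
  have h := Matrix.eq_zero_of_hasDerivAt_apply_of_forall_eq
    (hasDerivAt_lauPairingT_apply m γ γd α₀ α₁ α₂ hm hγd n i t) horth
  rw [horth t] at h
  linear_combination (norm := module) h

theorem evolutionDefect_of_neg
    (hγd : ∀ (n : ℕ) (j : ℤ) (t : ℝ) (x y : Fin p),
      HasDerivAt (fun s => γ n j s x y) (γd n j t x y) t)
    (hlow : ∀ (n : ℕ) (j : ℤ) (t : ℝ), j < 0 → γ n j t = 0) (k : ℕ) (t : ℝ) {j : ℤ}
    (hj : j < 0) : evolutionDefect m γ γd α₀ α₁ α₂ (k + 1) t j = 0 := by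
  have hd : γd (k + 1) j t = 0 :=
    Matrix.eq_zero_of_hasDerivAt_apply_of_forall_eq (hγd _ _ t) (hlow _ _ · hj)
  simp [evolutionDefect, totalDeriv, hd, hlow _ _ _ hj, hlow _ _ _ (show j - 1 < 0 by omega)]

theorem evolutionDefect_of_le
    (hγd : ∀ (n : ℕ) (j : ℤ) (t : ℝ) (x y : Fin p),
      HasDerivAt (fun s => γ n j s x y) (γd n j t x y) t)
    (hmonic : ∀ (n : ℕ) (t : ℝ), γ n (n : ℤ) t = 1)
    (hhigh : ∀ (n : ℕ) (j : ℤ) (t : ℝ), (n : ℤ) < j → γ n j t = 0) (k : ℕ) (t : ℝ) {j : ℤ}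
    (hj : ((k + 1 : ℕ) : ℤ) ≤ j) : evolutionDefect m γ γd α₀ α₁ α₂ (k + 1) t j = 0 := by
  rcases hj.eq_or_lt with rfl | hj
  · have hd : γd (k + 1) (k + 1 : ℕ) t = 0 :=
      Matrix.eq_zero_of_hasDerivAt_apply_of_forall_eq (hγd _ _ t) (hmonic _)
    have hlead := hmonic (k + 1) t
    have hprev := hmonic k t
    have hk := hhigh k (k + 1 : ℕ) t (by omega)
    push_cast at hd hlead hk ⊢
    simp [evolutionDefect, totalDeriv, hd, hlead, hprev, hk]
  · have hd : γd (k + 1) j t = 0 :=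
      Matrix.eq_zero_of_hasDerivAt_apply_of_forall_eq (hγd _ _ t) (hhigh _ _ · hj)
    simp [evolutionDefect, totalDeriv, hd, hhigh _ _ _ hj, hhigh k j t (by omega),
      hhigh k (j - 1) t (by omega)]

variable {m γ}

theorem lauAT_succ_mul_lauTauT {k : ℕ} {t : ℝ} (hτ : IsUnit (lauTauT p m γ k t)) :
    lauAT p m γ (k + 1) t * lauTauT p m γ k t = -lauTauT p m γ (k + 1) t := by
  rw [lauAT, Nat.add_sub_cancel,
    Matrix.nonsing_inv_mul_cancel_right _ _ ((Matrix.isUnit_iff_isUnit_det _).mp hτ)]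

theorem lauBT_succ_inv_mul_lauAT_mul_lauHT {k : ℕ} {t : ℝ}
    (hH : ∀ n : ℕ, IsUnit (lauHT p m γ n t)) (hτ : ∀ n : ℕ, IsUnit (lauTauT p m γ n t)) :
    (lauBT p m γ (k + 1) t)⁻¹ * lauAT p m γ (k + 1) t * lauHT p m γ k t =
      lauHT p m γ (k + 1) t := by
  have ha : IsUnit (lauAT p m γ (k + 1) t) := by
    rw [lauAT, Nat.add_sub_cancel]
    exact (hτ (k + 1)).neg.mul (Matrix.isUnit_nonsing_inv_iff.mpr (hτ k))
  have hb : IsUnit (lauBT p m γ (k + 1) t) := by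
    rw [lauBT, Nat.add_sub_cancel]
    exact (ha.mul (hH k)).mul (Matrix.isUnit_nonsing_inv_iff.mpr (hH (k + 1)))
  have hbH : lauBT p m γ (k + 1) t * lauHT p m γ (k + 1) t =
      lauAT p m γ (k + 1) t * lauHT p m γ k t := by
    rw [lauBT, Nat.add_sub_cancel, Matrix.nonsing_inv_mul_cancel_right _ _
      ((Matrix.isUnit_iff_isUnit_det _).mp (hH (k + 1)))]
  rw [mul_assoc, ← hbH,
    Matrix.nonsing_inv_mul_cancel_left _ _ ((Matrix.isUnit_iff_isUnit_det _).mp hb)]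

theorem lauAT_succ_mul_lauPairingT_sub_one {k i : ℕ} {t : ℝ}
    (horth : ∀ n i : ℕ, i < n → lauPairingT p m γ n i t = 0)
    (hτ : IsUnit (lauTauT p m γ k t)) (hi : i ≤ k) :
    lauAT p m γ (k + 1) t * lauPairingT p m γ k (i - 1) t =
      -lauPairingT p m γ (k + 1) (i - 1) t := by
  rcases i with _ | i
  · exact lauAT_succ_mul_lauTauT hτ
  · rw [Nat.cast_succ, add_sub_cancel_right, horth k i hi, horth (k + 1) i (by omega),
      mul_zero, neg_zero]

theorem lauBT_succ_inv_mul_lauAT_mul_lauPairingT {k i : ℕ} {t : ℝ}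
    (horth : ∀ n i : ℕ, i < n → lauPairingT p m γ n i t = 0)
    (hH : ∀ n : ℕ, IsUnit (lauHT p m γ n t)) (hτ : ∀ n : ℕ, IsUnit (lauTauT p m γ n t))
    (hi : i ≤ k) :
    (lauBT p m γ (k + 1) t)⁻¹ * lauAT p m γ (k + 1) t * lauPairingT p m γ k i t =
      lauPairingT p m γ (k + 1) (i + 1) t := by
  rcases hi.eq_or_lt with rfl | hi
  · exact lauBT_succ_inv_mul_lauAT_mul_lauHT hH hτ
  · rw [horth k i hi, ← Nat.cast_succ, horth (k + 1) (i + 1) (by omega), mul_zero]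

theorem pairing_evolutionDefect_eq_zero
    (hm : ∀ (j : ℤ) (t : ℝ) (x y : Fin p), HasDerivAt (fun s => m j s x y)
      (((α₀ * (j : ℝ)) • m j t + α₁ • m (j + 1) t + α₂ • m (j - 1) t) x y) t)
    (hγd : ∀ (n : ℕ) (j : ℤ) (t : ℝ) (x y : Fin p),
      HasDerivAt (fun s => γ n j s x y) (γd n j t x y) t)
    (hmonic : ∀ (n : ℕ) (t : ℝ), γ n (n : ℤ) t = 1)
    (hlow : ∀ (n : ℕ) (j : ℤ) (t : ℝ), j < 0 → γ n j t = 0)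
    (hhigh : ∀ (n : ℕ) (j : ℤ) (t : ℝ), (n : ℤ) < j → γ n j t = 0)
    (horth : ∀ (n : ℕ) (i : ℕ) (t : ℝ), i < n → lauPairingT p m γ n (i : ℤ) t = 0)
    {t : ℝ} (hH : ∀ n : ℕ, IsUnit (lauHT p m γ n t)) (hτ : ∀ n : ℕ, IsUnit (lauTauT p m γ n t))
    {k i : ℕ} (hi : i < k + 1) :
    pairing (m · t) (k + 1) (evolutionDefect m γ γd α₀ α₁ α₂ (k + 1) t) i = 0 := by
  rw [← pairing_succ_of_eq_zero _ _ _
    (evolutionDefect_of_le m γ γd α₀ α₁ α₂ hγd hmonic hhigh k t le_rfl)]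
  unfold evolutionDefect
  simp only [Nat.add_sub_cancel, mul_sub, pairing_sub, pairing_add, pairing_smul,
    pairing_mul_left]
  rw [pairing_succ_shift (c := (γ k · t)) _ _ _ (hlow k (-1) t (by norm_num)),
    pairing_succ_of_eq_zero (c := (γ k · t)) _ _ _ (hhigh k (k + 1 : ℕ) t (by omega)),
    pairing_totalDeriv m γ γd α₀ α₁ α₂ hm hγd (horth (k + 1) i · hi) t]
  simp only [← lauPairingT_eq_pairing]
  rw [lauAT_succ_mul_lauPairingT_sub_one (horth · · t) (hτ k) (by omega),
    lauBT_succ_inv_mul_lauAT_mul_lauPairingT (horth · · t) hH hτ (by omega), horth (k + 1) i t hi]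
  simp only [smul_zero, mul_zero, zero_add, sub_zero, smul_neg, neg_smul]
  abel

end Evolution

end LaurentBiorthogonal

open LaurentBiorthogonal

theorem statement6_general {p : ℕ} (α₀ α₁ α₂ : ℝ)
    (m : ℤ → ℝ → Matrix (Fin p) (Fin p) ℝ)
    (hm : ∀ (j : ℤ) (t : ℝ) (x y : Fin p),
      HasDerivAt (fun s => m j s x y)
        (((α₀ * (j : ℝ)) • m j t + α₁ • m (j + 1) t + α₂ • m (j - 1) t) x y) t)
    (γ γd : ℕ → ℤ → ℝ → Matrix (Fin p) (Fin p) ℝ)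
    (hγd : ∀ (n : ℕ) (j : ℤ) (t : ℝ) (x y : Fin p),
      HasDerivAt (fun s => γ n j s x y) (γd n j t x y) t)
    (hmonic : ∀ (n : ℕ) (t : ℝ), γ n (n : ℤ) t = 1)
    (hlow : ∀ (n : ℕ) (j : ℤ) (t : ℝ), j < 0 → γ n j t = 0)
    (hhigh : ∀ (n : ℕ) (j : ℤ) (t : ℝ), (n : ℤ) < j → γ n j t = 0)
    (horth : ∀ (n : ℕ) (i : ℕ) (t : ℝ), i < n → lauPairingT p m γ n (i : ℤ) t = 0)
    (hH : ∀ (n : ℕ) (t : ℝ), IsUnit (lauHT p m γ n t))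
    (hτ : ∀ (n : ℕ) (t : ℝ), IsUnit (lauTauT p m γ n t)) :
    ∀ n : ℕ, 1 ≤ n → ∀ (t : ℝ) (j : ℤ),
      γd n j t + ((j : ℝ) * α₀) • γ n j t =
        ((n : ℝ) * α₀) • γ n j t
          + α₁ • (lauAT p m γ n t * (γ (n - 1) (j - 1) t - γ n j t))
          - α₂ • ((lauBT p m γ n t)⁻¹ * lauAT p m γ n t * γ (n - 1) j t) := by
  intro n hn t j
  obtain ⟨k, rfl⟩ := Nat.exists_eq_add_of_le' hn
  have hP : IsMonicOrthogonal (m · t) (γ · · t) :=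
    ⟨(hmonic · t), (hlow · · t), (hhigh · · t), (horth · · t)⟩
  have hdefect : evolutionDefect m γ γd α₀ α₁ α₂ (k + 1) t = 0 :=
    hP.eq_zero_of_pairing_eq_zero (hH · t)
      (fun _ hj => evolutionDefect_of_neg m γ γd α₀ α₁ α₂ hγd hlow k t hj)
      (fun _ hj => evolutionDefect_of_le m γ γd α₀ α₁ α₂ hγd hmonic hhigh k t hj)
      (fun _ hi => pairing_evolutionDefect_eq_zero γd α₀ α₁ α₂ hm hγd hmonic hlow hhigh horth
        (hH · t) (hτ · t) hi)
  exact sub_eq_zero.mp (congrFun hdefect j)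

/-- time evolution of the monic matrix Laurent biorthogonal
polynomials: `DP_n = nα₀ P_n + α₁ a_n (λ P_{n-1} - P_n) - α₂ b_n⁻¹ a_n P_{n-1}`,
as an identity between coefficients of matrix polynomials in `λ`, where
`(DP_n)(λ,t) = Σ_j (γ_{n,j}'(t) + jα₀ γ_{n,j}(t)) λ^j`. -/
theorem statement6 {p : ℕ} (hp : 1 ≤ p) (α₀ α₁ α₂ : ℝ)
    (m : ℤ → ℝ → Matrix (Fin p) (Fin p) ℝ)
    (hm : ∀ (j : ℤ) (t : ℝ) (x y : Fin p),
      HasDerivAt (fun s => m j s x y)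
        (((α₀ * (j : ℝ)) • m j t + α₁ • m (j + 1) t + α₂ • m (j - 1) t) x y) t)
    (γ γd : ℕ → ℤ → ℝ → Matrix (Fin p) (Fin p) ℝ)
    (hγd : ∀ (n : ℕ) (j : ℤ) (t : ℝ) (x y : Fin p),
      HasDerivAt (fun s => γ n j s x y) (γd n j t x y) t)
    (hmonic : ∀ (n : ℕ) (t : ℝ), γ n (n : ℤ) t = 1)
    (hlow : ∀ (n : ℕ) (j : ℤ) (t : ℝ), j < 0 → γ n j t = 0)
    (hhigh : ∀ (n : ℕ) (j : ℤ) (t : ℝ), (n : ℤ) < j → γ n j t = 0)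
    (horth : ∀ (n : ℕ) (i : ℕ) (t : ℝ), i < n → lauPairingT p m γ n (i : ℤ) t = 0)
    (hH : ∀ (n : ℕ) (t : ℝ), IsUnit (lauHT p m γ n t))
    (hτ : ∀ (n : ℕ) (t : ℝ), IsUnit (lauTauT p m γ n t)) :
    ∀ n : ℕ, 1 ≤ n → ∀ (t : ℝ) (j : ℤ),
      γd n j t + ((j : ℝ) * α₀) • γ n j t =
        ((n : ℝ) * α₀) • γ n j t
          + α₁ • (lauAT p m γ n t * (γ (n - 1) (j - 1) t - γ n j t))
          - α₂ • ((lauBT p m γ n t)⁻¹ * lauAT p m γ n t * γ (n - 1) j t) :=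
  statement6_general α₀ α₁ α₂ m hm γ γd hγd hmonic hlow hhigh horth hH hτ
end

section
/- Let α₀, α₁, α₂ ∈ ℝ. Let a_n, b_n : ℝ → M be differentiable with a_n(t) and b_n(t) invertible for all n ≥ 1, n ≥ 0 respectively, and let (P_n(·,t))_{n≥0} be monic matrix polynomials with differentiable coefficients. Suppose for all t: the recurrences λ P_0 = P_1 + b_0 P_0 and λ(P_n + a_n P_{n−1}) = P_{n+1} + b_n P_n (n ≥ 1) hold, DP_0 = 0, and the evolution DP_n = n α₀ P_n + α₁ a_n (λ P_{n−1} − P_n) − α₂ b_n^{−1} a_n P_{n−1} holds for n ≥ 1, where (DP_n)(λ,t) := Σ_j (γ_{n,j}′(t) + j α₀ γ_{n,j}(t)) λ^j. Then the recurrence coefficients satisfy the noncommutative nonisospectral mixed relativistic Toda lattice: for all n ≥ 2 and t, a_n′ = α₀ a_n + α₁(−a_{n+1} a_n + a_n a_{n−1} + b_n a_n − a_n b_{n−1}) + α₂(b_n^{−1} a_n − a_n b_{n−1}^{−1}) and b_n′ = α₀ b_n + α₁(b_n a_n − a_{n+1} b_n) + α₂(b_{n+1}^{−1} a_{n+1}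 − a_n b_{n−1}^{−1}). -/
/-!
Compare two coefficients of the matrix polynomials. The recurrence gives, for the constant
coefficients `c_n = P_n(0)`, the relation `c_{n+1} = -b_n c_n`, so `c_n = ± b_{n-1} ⋯ b_0` is
invertible; the evolution says `c_n' = L_n c_n` for an explicit `L_n`. Differentiating
`c_{n+1} = -b_n c_n` and cancelling `c_n` yields `b_n' = L_{n+1} b_n - b_n L_n`, which expands to
the equation for `b_n`. For the subleading coefficients `s_n` (of `λ^{n-1}`) the recurrence gives
`s_{n+1} = s_n + a_n - b_n`; differentiating it and inserting the evolution of `s_n` and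
`s_{n+1}` gives `a_n' - b_n'`, hence the equation for `a_n`.
-/

section EntrywiseDeriv

variable {𝕜 : Type*} [NontriviallyNormedField 𝕜] {l m n : Type*}

def HasEntrywiseDerivAt (f : 𝕜 → Matrix m n 𝕜) (f' : Matrix m n 𝕜) (t : 𝕜) : Prop :=
  ∀ i j, HasDerivAt (fun s => f s i j) (f' i j) t

namespace HasEntrywiseDerivAt

variable {f g : 𝕜 → Matrix m n 𝕜} {f' g' : Matrix m n 𝕜} {t : 𝕜}

theorem unique_of_eq (hf : HasEntrywiseDerivAt f f' t) (hg : HasEntrywiseDerivAt g g' t)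
    (hfg : f = g) : f' = g' :=
  Matrix.ext fun i j => (hf i j).unique (hfg ▸ hg i j)

theorem add (hf : HasEntrywiseDerivAt f f' t) (hg : HasEntrywiseDerivAt g g' t) :
    HasEntrywiseDerivAt (fun s => f s + g s) (f' + g') t :=
  fun i j => (hf i j).add (hg i j)

theorem sub (hf : HasEntrywiseDerivAt f f' t) (hg : HasEntrywiseDerivAt g g' t) :
    HasEntrywiseDerivAt (fun s => f s - g s) (f' - g') t :=
  fun i j => (hf i j).sub (hg i j)

theorem neg (hf : HasEntrywiseDerivAt f f' t) :
    HasEntrywiseDerivAt (fun s => -f s) (-f') t :=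
  fun i j => (hf i j).neg

theorem mul [Fintype m] {f : 𝕜 → Matrix l m 𝕜} {g : 𝕜 → Matrix m n 𝕜}
    {f' : Matrix l m 𝕜} {g' : Matrix m n 𝕜}
    (hf : HasEntrywiseDerivAt f f' t) (hg : HasEntrywiseDerivAt g g' t) :
    HasEntrywiseDerivAt (fun s => f s * g s) (f' * g t + f t * g') t := by
  intro i k
  simp only [Matrix.mul_apply, Matrix.add_apply, ← Finset.sum_add_distrib]
  exact HasDerivAt.fun_sum fun j _ => (hf i j).mul (hg j k)

end HasEntrywiseDerivAt

end EntrywiseDeriv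

theorem isUnit_of_succ_eq_neg_mul {M : Type*} [Monoid M] [HasDistribNeg M] {b c : ℕ → M}
    (hb : ∀ n, IsUnit (b n)) (h0 : IsUnit (c 0)) (hsucc : ∀ n, c (n + 1) = -(b n * c n)) :
    ∀ n, IsUnit (c n)
  | 0 => h0
  | n + 1 => hsucc n ▸ ((hb n).mul (isUnit_of_succ_eq_neg_mul hb h0 hsucc n)).neg

/-- Differentiating `c₁ = -b c`, where `dc = L c` and `dc₁ = L₁ c₁` are the derivatives of `c`
and `c₁`, gives the Lax form of `b'`. -/
theorem lax_of_logDeriv {R : Type*} [Ring R] {b b' c dc dc₁ L L₁ : R} (hc : IsUnit c)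
    (hderiv : dc₁ = -(b' * c + b * dc)) (hL : dc = L * c) (hL₁ : dc₁ = L₁ * -(b * c)) :
    b' = L₁ * b - b * L := by
  rw [← hc.mul_left_inj]
  calc b' * c = -dc₁ - b * dc := by rw [hderiv]; abel
    _ = (L₁ * b - b * L) * c := by rw [hL₁, hL]; noncomm_ring

section Recurrence

variable {R : Type*} [Ring R] {a b : ℕ → R} {γ : ℕ → ℤ → R}

theorem coeff_zero_succ (hlow : ∀ n j, j < 0 → γ n j = 0)
    (hrec0 : ∀ j, γ 0 (j - 1) = γ 1 j + b 0 * γ 0 j)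
    (hrec : ∀ n, 1 ≤ n → ∀ j,
      γ n (j - 1) + a n * γ (n - 1) (j - 1) = γ (n + 1) j + b n * γ n j)
    (n : ℕ) : γ (n + 1) 0 = -(b n * γ n 0) := by
  rcases Nat.eq_zero_or_pos n with rfl | hn
  · have h := hrec0 0
    rw [hlow 0 _ (by norm_num)] at h
    exact eq_neg_of_add_eq_zero_left h.symm
  · have h := hrec n hn 0
    rw [hlow n _ (by norm_num), hlow (n - 1) _ (by norm_num), mul_zero, add_zero] at h
    exact eq_neg_of_add_eq_zero_left h.symm

theorem coeff_pred_of_monic (hmonic : ∀ n : ℕ, γ n n = 1) {n : ℕ} (hn : 1 ≤ n) :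
    γ (n - 1) ((n : ℤ) - 1) = 1 := by
  simpa [Nat.cast_pred hn] using hmonic (n - 1)

def subleadingCoeff (γ : ℕ → ℤ → R) (n : ℕ) : R := γ n ((n : ℤ) - 1)

theorem subleadingCoeff_succ (hmonic : ∀ n : ℕ, γ n n = 1)
    (hrec : ∀ n, 1 ≤ n → ∀ j,
      γ n (j - 1) + a n * γ (n - 1) (j - 1) = γ (n + 1) j + b n * γ n j)
    {n : ℕ} (hn : 1 ≤ n) :
    subleadingCoeff γ (n + 1) = subleadingCoeff γ n + a n - b n := by
  have h := hrec n hn n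
  rw [coeff_pred_of_monic hmonic hn, hmonic, mul_one, mul_one] at h
  simp only [subleadingCoeff, Nat.cast_succ, add_sub_cancel_right]
  exact eq_sub_of_add_eq h.symm

end Recurrence

section Evolution

variable {m K : Type*} [Fintype m] [DecidableEq m] [Field K] (α₀ α₁ α₂ : K)
  {a b : ℕ → Matrix m m K} {γ γd : ℕ → ℤ → Matrix m m K}

/-- `L n` with `P_n(0)' = L n * P_n(0)`: the `α₂` term absorbs `P_{n-1}(0) = -b_{n-1}⁻¹ P_n(0)`. -/
noncomputable def constCoeffLogDeriv (a b : ℕ → Matrix m m K) (n : ℕ) : Matrix m m K :=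
  ((n : K) * α₀) • 1 - α₁ • a n + α₂ • ((b n)⁻¹ * a n * (b (n - 1))⁻¹)

theorem constCoeffLogDeriv_succ_mul_sub {n : ℕ} (hb : IsUnit (b n)) :
    constCoeffLogDeriv α₀ α₁ α₂ a b (n + 1) * b n - b n * constCoeffLogDeriv α₀ α₁ α₂ a b n =
      α₀ • b n + α₁ • (b n * a n - a (n + 1) * b n)
        + α₂ • ((b (n + 1))⁻¹ * a (n + 1) - a n * (b (n - 1))⁻¹) := by
  have hdet := (Matrix.isUnit_iff_isUnit_det _).mp hb
  simp only [constCoeffLogDeriv, Nat.add_sub_cancel, add_mul, sub_mul, mul_add, mul_sub,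
    smul_mul_assoc, mul_smul_comm, one_mul, mul_one, ← mul_assoc, Nat.cast_succ,
    Matrix.nonsing_inv_mul_cancel_right _ _ hdet, Matrix.mul_nonsing_inv _ hdet]
  module

theorem constCoeff_evolution (hlow : ∀ n j, j < 0 → γ n j = 0) (hb : ∀ n, IsUnit (b n))
    (hsucc : ∀ n, γ (n + 1) 0 = -(b n * γ n 0))
    (hev : ∀ n, 1 ≤ n → ∀ j : ℤ,
      γd n j + ((j : K) * α₀) • γ n j =
        ((n : K) * α₀) • γ n j + α₁ • (a n * (γ (n - 1) (j - 1) - γ n j))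
          - α₂ • ((b n)⁻¹ * a n * γ (n - 1) j))
    {n : ℕ} (hn : 1 ≤ n) :
    γd n 0 = constCoeffLogDeriv α₀ α₁ α₂ a b n * γ n 0 := by
  have hprev : γ (n - 1) 0 = -((b (n - 1))⁻¹ * γ n 0) := by
    rw [← Nat.sub_add_cancel hn, hsucc, Nat.add_sub_cancel, mul_neg, neg_neg,
      Matrix.nonsing_inv_mul_cancel_left _ _ ((Matrix.isUnit_iff_isUnit_det _).mp (hb _))]
  have h := hev n hn 0
  rw [hlow (n - 1) _ (by norm_num), hprev] at h
  rw [constCoeffLogDeriv]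
  simp only [Int.cast_zero, zero_mul, zero_smul, add_zero, zero_sub, mul_neg, add_mul, sub_mul,
    smul_mul_assoc, one_mul, mul_assoc] at h ⊢
  linear_combination (norm := module) h

theorem subleadingCoeff_evolution (hmonic : ∀ n : ℕ, γ n n = 1)
    (hsucc : ∀ n, 1 ≤ n → subleadingCoeff γ (n + 1) = subleadingCoeff γ n + a n - b n)
    (hev : ∀ n, 1 ≤ n → ∀ j : ℤ,
      γd n j + ((j : K) * α₀) • γ n j =
        ((n : K) * α₀) • γ n j + α₁ • (a n * (γ (n - 1) (j - 1) - γ n j))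
          - α₂ • ((b n)⁻¹ * a n * γ (n - 1) j))
    {n : ℕ} (hn : 2 ≤ n) :
    subleadingCoeff γd n = α₀ • subleadingCoeff γ n
      + α₁ • (a n * (b (n - 1) - a (n - 1))) - α₂ • ((b n)⁻¹ * a n) := by
  have hprev : γ (n - 1) ((n : ℤ) - 1 - 1) = subleadingCoeff γ n + b (n - 1) - a (n - 1) := by
    have h := hsucc (n - 1) (by omega)
    rw [Nat.sub_add_cancel (by omega : 1 ≤ n)] at h
    rw [h, subleadingCoeff, Nat.cast_pred (by omega : 0 < n)]
    abel
  have h := hev n (by omega) ((n : ℤ) - 1)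
  rw [coeff_pred_of_monic hmonic (by omega), hprev, mul_one] at h
  simp only [subleadingCoeff, mul_sub, mul_add] at h ⊢
  push_cast at h
  linear_combination (norm := module) h

end Evolution

theorem statement7_general {p : ℕ} (α₀ α₁ α₂ : ℝ)
    (a b a' b' : ℕ → ℝ → Matrix (Fin p) (Fin p) ℝ)
    (ha' : ∀ (n : ℕ) (t : ℝ) (x y : Fin p),
      HasDerivAt (fun s => a n s x y) (a' n t x y) t)
    (hb' : ∀ (n : ℕ) (t : ℝ) (x y : Fin p),
      HasDerivAt (fun s => b n s x y) (b' n t x y) t)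
    (hbU : ∀ (n : ℕ) (t : ℝ), IsUnit (b n t))
    (γ γd : ℕ → ℤ → ℝ → Matrix (Fin p) (Fin p) ℝ)
    (hγd : ∀ (n : ℕ) (j : ℤ) (t : ℝ) (x y : Fin p),
      HasDerivAt (fun s => γ n j s x y) (γd n j t x y) t)
    (hmonic : ∀ (n : ℕ) (t : ℝ), γ n (n : ℤ) t = 1)
    (hlow : ∀ (n : ℕ) (j : ℤ) (t : ℝ), j < 0 → γ n j t = 0)
    -- the recurrence `λ P_0 = P_1 + b_0 P_0`
    (hrec0 : ∀ (t : ℝ) (j : ℤ), γ 0 (j - 1) t = γ 1 j t + b 0 t * γ 0 j t)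
    -- the recurrence `λ (P_n + a_n P_{n-1}) = P_{n+1} + b_n P_n` for `n ≥ 1`
    (hrec : ∀ n : ℕ, 1 ≤ n → ∀ (t : ℝ) (j : ℤ),
      γ n (j - 1) t + a n t * γ (n - 1) (j - 1) t = γ (n + 1) j t + b n t * γ n j t)
    -- `DP_n = nα₀ P_n + α₁ a_n (λ P_{n-1} - P_n) - α₂ b_n⁻¹ a_n P_{n-1}` for `n ≥ 1`
    (hev : ∀ n : ℕ, 1 ≤ n → ∀ (t : ℝ) (j : ℤ),
      γd n j t + ((j : ℝ) * α₀) • γ n j t =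
        ((n : ℝ) * α₀) • γ n j t
          + α₁ • (a n t * (γ (n - 1) (j - 1) t - γ n j t))
          - α₂ • ((b n t)⁻¹ * a n t * γ (n - 1) j t)) :
    ∀ n : ℕ, 2 ≤ n → ∀ t : ℝ,
      a' n t = α₀ • a n t
          + α₁ • (-(a (n + 1) t * a n t) + a n t * a (n - 1) t
              + b n t * a n t - a n t * b (n - 1) t)
          + α₂ • ((b n t)⁻¹ * a n t - a n t * (b (n - 1) t)⁻¹) ∧
      b' n t = α₀ • b n t
          + α₁ • (b n t * a n t - a (n + 1) t * b n t)
          + α₂ • ((b (n + 1) t)⁻¹ * a (n + 1) t - a n t * (b (n - 1) t)⁻¹) := by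
  intro n hn t
  have hconst (s : ℝ) (k : ℕ) : γ (k + 1) 0 s = -(b k s * γ k 0 s) :=
    coeff_zero_succ (hlow · · s) (hrec0 s) (hrec · · s) k
  have hsub (s : ℝ) (k : ℕ) (hk : 1 ≤ k) : subleadingCoeff (γ · · s) (k + 1) =
      subleadingCoeff (γ · · s) k + a k s - b k s :=
    subleadingCoeff_succ (a := (a · s)) (b := (b · s)) (hmonic · s) (hrec · · s) hk
  have da (k : ℕ) : HasEntrywiseDerivAt (a k) (a' k t) t := ha' k t
  have db (k : ℕ) : HasEntrywiseDerivAt (b k) (b' k t) t := hb' k t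
  have dγ (k : ℕ) (j : ℤ) : HasEntrywiseDerivAt (γ k j) (γd k j t) t := hγd k j t
  have hconst' : γd (n + 1) 0 t = -(b' n t * γ n 0 t + b n t * γd n 0 t) :=
    (dγ (n + 1) 0).unique_of_eq ((db n).mul (dγ n 0)).neg (funext (hconst · n))
  have hsub' : subleadingCoeff (γd · · t) (n + 1) =
      subleadingCoeff (γd · · t) n + a' n t - b' n t :=
    (dγ _ _).unique_of_eq (((dγ _ _).add (da n)).sub (db n)) (funext (hsub · n (by omega)))
  have hunit : IsUnit (γ n 0 t) :=
    isUnit_of_succ_eq_neg_mul (c := (γ · 0 t)) (hbU · t) (hmonic 0 t ▸ isUnit_one) (hconst t) n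
  have hL (k : ℕ) (hk : 1 ≤ k) :=
    constCoeff_evolution α₀ α₁ α₂ (hlow · · t) (hbU · t) (hconst t) (hev · · t) hk
  have hb_eq : b' n t = α₀ • b n t + α₁ • (b n t * a n t - a (n + 1) t * b n t)
      + α₂ • ((b (n + 1) t)⁻¹ * a (n + 1) t - a n t * (b (n - 1) t)⁻¹) := by
    rw [lax_of_logDeriv hunit hconst' (hL n (by omega)) (hconst t n ▸ hL (n + 1) (by omega)),
      constCoeffLogDeriv_succ_mul_sub α₀ α₁ α₂ (hbU n t)]
  refine ⟨?_, hb_eq⟩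
  have e₁ := subleadingCoeff_evolution α₀ α₁ α₂ (hmonic · t) (hsub t) (hev · · t) hn
  have e₂ := subleadingCoeff_evolution α₀ α₁ α₂ (hmonic · t) (hsub t) (hev · · t)
    (show 2 ≤ n + 1 by omega)
  rw [Nat.add_sub_cancel] at e₂
  simp only [mul_sub] at e₁ e₂
  linear_combination (norm := module) -hsub' + e₂ - e₁ + hb_eq + α₀ • hsub t n (by omega)

/-- compatibility of the three-term recurrence and the
nonisospectral time evolution yields the noncommutative nonisospectral mixed
relativistic Toda lattice for the recurrence coefficients `a_n`, `b_n`.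
Monic matrix polynomials are encoded by their coefficients
`γ n j t` (with `γ n n = I`, `γ n j = 0` for `j < 0` or `j > n`), and identities
between matrix polynomials in `λ` are identities between all coefficients. -/
theorem statement7 {p : ℕ} (hp : 1 ≤ p) (α₀ α₁ α₂ : ℝ)
    (a b a' b' : ℕ → ℝ → Matrix (Fin p) (Fin p) ℝ)
    (ha' : ∀ (n : ℕ) (t : ℝ) (x y : Fin p),
      HasDerivAt (fun s => a n s x y) (a' n t x y) t)
    (hb' : ∀ (n : ℕ) (t : ℝ) (x y : Fin p),
      HasDerivAt (fun s => b n s x y) (b' n t x y) t)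
    (haU : ∀ n : ℕ, 1 ≤ n → ∀ t : ℝ, IsUnit (a n t))
    (hbU : ∀ (n : ℕ) (t : ℝ), IsUnit (b n t))
    (γ γd : ℕ → ℤ → ℝ → Matrix (Fin p) (Fin p) ℝ)
    (hγd : ∀ (n : ℕ) (j : ℤ) (t : ℝ) (x y : Fin p),
      HasDerivAt (fun s => γ n j s x y) (γd n j t x y) t)
    (hmonic : ∀ (n : ℕ) (t : ℝ), γ n (n : ℤ) t = 1)
    (hlow : ∀ (n : ℕ) (j : ℤ) (t : ℝ), j < 0 → γ n j t = 0)
    (hhigh : ∀ (n : ℕ) (j : ℤ) (t : ℝ), (n : ℤ) < j → γ n j t = 0)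
    -- the recurrence `λ P_0 = P_1 + b_0 P_0`
    (hrec0 : ∀ (t : ℝ) (j : ℤ), γ 0 (j - 1) t = γ 1 j t + b 0 t * γ 0 j t)
    -- the recurrence `λ (P_n + a_n P_{n-1}) = P_{n+1} + b_n P_n` for `n ≥ 1`
    (hrec : ∀ n : ℕ, 1 ≤ n → ∀ (t : ℝ) (j : ℤ),
      γ n (j - 1) t + a n t * γ (n - 1) (j - 1) t = γ (n + 1) j t + b n t * γ n j t)
    -- `DP_0 = 0`
    (hev0 : ∀ (t : ℝ) (j : ℤ), γd 0 j t + ((j : ℝ) * α₀) • γ 0 j t = 0)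
    -- `DP_n = nα₀ P_n + α₁ a_n (λ P_{n-1} - P_n) - α₂ b_n⁻¹ a_n P_{n-1}` for `n ≥ 1`
    (hev : ∀ n : ℕ, 1 ≤ n → ∀ (t : ℝ) (j : ℤ),
      γd n j t + ((j : ℝ) * α₀) • γ n j t =
        ((n : ℝ) * α₀) • γ n j t
          + α₁ • (a n t * (γ (n - 1) (j - 1) t - γ n j t))
          - α₂ • ((b n t)⁻¹ * a n t * γ (n - 1) j t)) :
    ∀ n : ℕ, 2 ≤ n → ∀ t : ℝ,
      a' n t = α₀ • a n t
          + α₁ • (-(a (n + 1) t * a n t) + a n t * a (n - 1) t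
              + b n t * a n t - a n t * b (n - 1) t)
          + α₂ • ((b n t)⁻¹ * a n t - a n t * (b (n - 1) t)⁻¹) ∧
      b' n t = α₀ • b n t
          + α₁ • (b n t * a n t - a (n + 1) t * b n t)
          + α₂ • ((b (n + 1) t)⁻¹ * a (n + 1) t - a n t * (b (n - 1) t)⁻¹) :=
  statement7_general α₀ α₁ α₂ a b a' b' ha' hb' hbU γ γd hγd hmonic hlow hrec0 hrec hev
end

section
/- Let K ∈ M be a fixed matrix and let m_j : ℝ → M (j ∈ ℤ) be differentiable moments satisfying m_j′(t) = m_j(t) K for all j, t. Assume that for every n ≥ 1 and t the block moment matrix Λ_{n−1}(t) is invertible, and that H_n(t) and τ_n(t) are invertible for every n ≥ 0 and t. Then the recurrence coefficients a_n(t) := −τ_n(t)τ_{n−1}(t)^{−1} and b_n(t) := a_n(t)H_{n−1}(t)H_n(t)^{−1}, as well as every polynomial coefficient γ_{n,j}(t) := −(θ_n(t)Λ_{n−1}(t)^{−1})_j (the j-th p×p block, 0 ≤ j ≤ n−1), have vanishing time derivative: a_n′(t) = 0, b_n′(t) = 0 and γ_{n,j}′(t) = 0 for all t. -/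
/-- `H_0 := m_0` and `H_n := m_0 - θ_n Λ_{n-1}⁻¹ col(m_{-n}, …, m_{-1})` for `n ≥ 1`. -/
noncomputable def Hqd (p : ℕ) (m : ℤ → Matrix (Fin p) (Fin p) ℝ) :
    ℕ → Matrix (Fin p) (Fin p) ℝ
  | 0 => m 0
  | (n + 1) => m 0 - blockTheta p (n + 1) m * (blockLam p (n + 1) m)⁻¹ *
      blockCol p (n + 1) (-((n : ℤ) + 1)) m

/-- `τ_0 := m_1` and `τ_n := m_{n+1} - θ_n Λ_{n-1}⁻¹ col(m_1, …, m_n)` for `n ≥ 1`. -/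
noncomputable def tauqd (p : ℕ) (m : ℤ → Matrix (Fin p) (Fin p) ℝ) :
    ℕ → Matrix (Fin p) (Fin p) ℝ
  | 0 => m 1
  | (n + 1) => m ((n : ℤ) + 2) - blockTheta p (n + 1) m * (blockLam p (n + 1) m)⁻¹ *
      blockCol p (n + 1) 1 m

/-- `a_n := -τ_n τ_{n-1}⁻¹`. -/
noncomputable def aqd (p : ℕ) (m : ℤ → Matrix (Fin p) (Fin p) ℝ) (n : ℕ) :
    Matrix (Fin p) (Fin p) ℝ :=
  -(tauqd p m n) * (tauqd p m (n - 1))⁻¹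

/-- `b_n := a_n H_{n-1} H_n⁻¹`. -/
noncomputable def bqd (p : ℕ) (m : ℤ → Matrix (Fin p) (Fin p) ℝ) (n : ℕ) :
    Matrix (Fin p) (Fin p) ℝ :=
  aqd p m n * Hqd p m (n - 1) * (Hqd p m n)⁻¹

open Matrix NormedSpace
open scoped Kronecker

theorem eq_mul_exp_smul_of_hasDerivAt {𝔸 : Type*} [NormedRing 𝔸] [NormedAlgebra ℝ 𝔸]
    [CompleteSpace 𝔸] {K : 𝔸} {f : ℝ → 𝔸} (hf : ∀ t, HasDerivAt f (f t * K) t) (t : ℝ) :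
    f t = f 0 * exp (t • K) := by
  have hg : ∀ s, HasDerivAt (fun u => f u * exp (-(u • K))) 0 s := fun s => by
    have hexp := (hasDerivAt_exp_smul_const' (𝕂 := ℝ) K (-s)).scomp s (hasDerivAt_neg s)
    have := (hf s).mul hexp
    simp only [Function.comp_def, neg_smul, one_smul, mul_neg, mul_assoc, add_neg_cancel] at this
    exact this
  have hconst := is_const_of_deriv_eq_zero (fun s => (hg s).differentiableAt)
    (fun s => (hg s).deriv) t 0
  have hinv : exp (-(t • K)) * exp (t • K) = 1 := by
    have hball : ∀ x : 𝔸, x ∈ Metric.eball 0 (expSeries ℝ 𝔸).radius := fun x => by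
      simp [expSeries_radius_eq_top]
    rw [← exp_add_of_commute_of_mem_ball (Commute.refl _).neg_left (hball _) (hball _),
      neg_add_cancel, exp_zero]
  calc f t = f t * exp (-(t • K)) * exp (t • K) := by rw [mul_assoc, hinv, mul_one]
    _ = f 0 * exp (t • K) := by rw [hconst]; simp

theorem Matrix.mul_mul_inv_mul_of_isUnit {l n α : Type*} [Fintype n] [DecidableEq n] [CommRing α]
    (A : Matrix l n α) (B : Matrix n n α) {D : Matrix n n α} (hD : IsUnit D) :
    A * D * (B * D)⁻¹ = A * B⁻¹ := by
  rw [mul_inv_rev, Matrix.mul_assoc, ← Matrix.mul_assoc D,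
    mul_nonsing_inv _ ((isUnit_iff_isUnit_det D).mp hD), Matrix.one_mul]

theorem Matrix.isUnit_kronecker {l n α : Type*} [Fintype l] [DecidableEq l] [Fintype n]
    [DecidableEq n] [CommRing α] {A : Matrix l l α} {B : Matrix n n α} (hA : IsUnit A)
    (hB : IsUnit B) : IsUnit (A ⊗ₖ B) := by
  rw [isUnit_iff_isUnit_det] at hA hB ⊢
  rw [det_kronecker]
  exact (hA.pow _).mul (hB.pow _)

section RightScaling

variable {p n : ℕ} (m : ℤ → Matrix (Fin p) (Fin p) ℝ) (E : Matrix (Fin p) (Fin p) ℝ)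

-- `1 ⊗ₖ E` is the block-diagonal matrix `diag(E, …, E)` in the indexing `Fin n × Fin p`.
theorem blockLam_mul_right :
    blockLam p n (fun j => m j * E) =
      blockLam p n m * ((1 : Matrix (Fin n) (Fin n) ℝ) ⊗ₖ E) := by
  ext ⟨k, x⟩ ⟨l, y⟩
  simp [blockLam, kroneckerMap_apply, Matrix.mul_apply, Fintype.sum_prod_type, one_apply]

theorem blockTheta_mul_right :
    blockTheta p n (fun j => m j * E) =
      blockTheta p n m * ((1 : Matrix (Fin n) (Fin n) ℝ) ⊗ₖ E) := by
  ext x ⟨l, y⟩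
  simp [blockTheta, kroneckerMap_apply, Matrix.mul_apply, Fintype.sum_prod_type, one_apply]

theorem blockCol_mul_right (r : ℤ) :
    blockCol p n r (fun j => m j * E) = blockCol p n r m * E := by
  ext ⟨k, x⟩ y
  simp [blockCol, Matrix.mul_apply]

variable {E} (hE : IsUnit E)
include hE

theorem blockTheta_mul_inv_blockLam_mul_right :
    blockTheta p n (fun j => m j * E) * (blockLam p n (fun j => m j * E))⁻¹ =
      blockTheta p n m * (blockLam p n m)⁻¹ := by
  rw [blockTheta_mul_right, blockLam_mul_right,
    mul_mul_inv_mul_of_isUnit _ _ (isUnit_kronecker isUnit_one hE)]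

theorem gammaQD_mul_right (j : Fin n) :
    gammaQD p n (fun i => m i * E) j = gammaQD p n m j := by
  simp only [gammaQD, blockTheta_mul_inv_blockLam_mul_right m hE]

theorem Hqd_mul_right (k : ℕ) : Hqd p (fun j => m j * E) k = Hqd p m k * E := by
  cases k with
  | zero => rfl
  | succ k =>
    simp only [Hqd, blockTheta_mul_inv_blockLam_mul_right m hE, blockCol_mul_right,
      sub_mul, Matrix.mul_assoc]

theorem tauqd_mul_right (k : ℕ) : tauqd p (fun j => m j * E) k = tauqd p m k * E := by
  cases k with
  | zero => rfl
  | succ k =>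
    simp only [tauqd, blockTheta_mul_inv_blockLam_mul_right m hE, blockCol_mul_right,
      sub_mul, Matrix.mul_assoc]

theorem aqd_mul_right (k : ℕ) : aqd p (fun j => m j * E) k = aqd p m k := by
  simp only [aqd, tauqd_mul_right m hE, neg_mul, mul_mul_inv_mul_of_isUnit _ _ hE]

theorem bqd_mul_right (k : ℕ) : bqd p (fun j => m j * E) k = bqd p m k := by
  simp only [bqd, aqd_mul_right m hE, Hqd_mul_right m hE, ← Matrix.mul_assoc,
    mul_mul_inv_mul_of_isUnit _ _ hE]

end RightScaling

attribute [local instance] Matrix.linftyOpNormedRing Matrix.linftyOpNormedAlgebra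

theorem statement9_general {p : ℕ}
    (K : Matrix (Fin p) (Fin p) ℝ)
    (m : ℤ → ℝ → Matrix (Fin p) (Fin p) ℝ)
    (hm : ∀ (j : ℤ) (t : ℝ) (x y : Fin p),
      HasDerivAt (fun s => m j s x y) ((m j t * K) x y) t) :
    (∀ n : ℕ, 1 ≤ n → ∀ (t : ℝ) (x y : Fin p),
      HasDerivAt (fun s => aqd p (fun j => m j s) n x y) 0 t ∧
      HasDerivAt (fun s => bqd p (fun j => m j s) n x y) 0 t) ∧
    (∀ n : ℕ, 1 ≤ n → ∀ (j : Fin n) (t : ℝ) (x y : Fin p),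
      HasDerivAt (fun s => gammaQD p n (fun i => m i s) j x y) 0 t) := by
  have hsol (s : ℝ) : (fun j => m j s) = fun j => m j 0 * exp (s • K) :=
    funext fun j => eq_mul_exp_smul_of_hasDerivAt
      (fun t => hasDerivAt_pi.2 fun x => hasDerivAt_pi.2 (hm j t x)) s
  have hE (s : ℝ) : IsUnit (exp (s • K)) := Matrix.isUnit_exp _
  refine ⟨fun n _ t x y => ⟨?_, ?_⟩, fun n _ j t x y => ?_⟩
  · simp_rw [hsol, aqd_mul_right _ (hE _)]
    exact hasDerivAt_const t _
  · simp_rw [hsol, bqd_mul_right _ (hE _)]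
    exact hasDerivAt_const t _
  · simp_rw [hsol, gammaQD_mul_right _ (hE _)]
    exact hasDerivAt_const t _

/-- if the moments satisfy `m_j' = m_j K`, then the recurrence
coefficients `a_n(t)`, `b_n(t)` and all polynomial coefficients `γ_{n,j}(t)`
have vanishing time derivative. -/
theorem statement9 {p : ℕ} (hp : 1 ≤ p)
    (K : Matrix (Fin p) (Fin p) ℝ)
    (m : ℤ → ℝ → Matrix (Fin p) (Fin p) ℝ)
    (hm : ∀ (j : ℤ) (t : ℝ) (x y : Fin p),
      HasDerivAt (fun s => m j s x y) ((m j t * K) x y) t)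
    (hΛ : ∀ n : ℕ, 1 ≤ n → ∀ t : ℝ, IsUnit (blockLam p n (fun j => m j t)))
    (hH : ∀ (n : ℕ) (t : ℝ), IsUnit (Hqd p (fun j => m j t) n))
    (hτ : ∀ (n : ℕ) (t : ℝ), IsUnit (tauqd p (fun j => m j t) n)) :
    (∀ n : ℕ, 1 ≤ n → ∀ (t : ℝ) (x y : Fin p),
      HasDerivAt (fun s => aqd p (fun j => m j s) n x y) 0 t ∧
      HasDerivAt (fun s => bqd p (fun j => m j s) n x y) 0 t) ∧
    (∀ n : ℕ, 1 ≤ n → ∀ (j : Fin n) (t : ℝ) (x y : Fin p),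
      HasDerivAt (fun s => gammaQD p n (fun i => m i s) j x y) 0 t) :=
  statement9_general K m hm
end

section
/- Let K ∈ M be a fixed matrix and let m_j : ℝ → M (j ∈ ℤ) be differentiable moments satisfying m_j′(t) = m_j(t) K for all j, t. Assume that for every n ≥ 1 and t the block moment matrix Λ_{n−1}(t) is invertible. Then the quasideterminants H_n(t) := m_0(t) − θ_n(t)Λ_{n−1}(t)^{−1}col(m_{−n}, …, m_{−1})(t) and τ_n(t) := m_{n+1}(t) − θ_n(t)Λ_{n−1}(t)^{−1}col(m_1, …, m_n)(t) satisfy H_n′(t) = H_n(t) K and τ_n′(t) = τ_n(t) K for all n ≥ 1 and t. -/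
/-- The quasideterminant `H_n(t) = m_0(t) - θ_n(t) Λ_{n-1}(t)⁻¹ col(m_{-n},…,m_{-1})(t)`
for `n ≥ 1`. -/
noncomputable def Hexpr (p n : ℕ) (m : ℤ → Matrix (Fin p) (Fin p) ℝ) :
    Matrix (Fin p) (Fin p) ℝ :=
  m 0 - blockTheta p n m * (blockLam p n m)⁻¹ * blockCol p n (-(n : ℤ)) m

/-- The quasideterminant `τ_n(t) = m_{n+1}(t) - θ_n(t) Λ_{n-1}(t)⁻¹ col(m_1,…,m_n)(t)`
for `n ≥ 1`. -/
noncomputable def tauexpr (p n : ℕ) (m : ℤ → Matrix (Fin p) (Fin p) ℝ) :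
    Matrix (Fin p) (Fin p) ℝ :=
  m ((n : ℤ) + 1) - blockTheta p n m * (blockLam p n m)⁻¹ * blockCol p n 1 m

/-!
Write `D = 1 ⊗ₖ K` for the block-diagonal matrix with diagonal blocks `K`. The relations
`m_j' = m_j K` say that `θ_n' = θ_n D`, `Λ_{n-1}' = Λ_{n-1} D` and `col' = col K`. Since
`(Λ⁻¹)' = -Λ⁻¹ Λ' Λ⁻¹ = -D Λ⁻¹`, the product `θ_n Λ_{n-1}⁻¹` has derivative
`θ D Λ⁻¹ - θ D Λ⁻¹ = 0`, so every quasideterminant `m_a - θ_n Λ_{n-1}⁻¹ col` inherits the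
equation `X' = X K` from its two moment terms.
-/

open scoped Kronecker

namespace Matrix

theorem nonsing_inv_mul_mul_nonsing_inv {n α : Type*} [Fintype n] [DecidableEq n] [CommRing α]
    (A : Matrix n n α) : A⁻¹ * A * A⁻¹ = A⁻¹ := by
  by_cases h : IsUnit A.det
  · rw [nonsing_inv_mul A h, Matrix.one_mul]
  · rw [nonsing_inv_apply_not_isUnit A h, Matrix.mul_zero]

theorem mul_one_kronecker_apply {α ι n p : Type*} [Semiring α] [Fintype n] [Fintype p]
    [DecidableEq n] (M : Matrix ι (n × p) α) (K : Matrix p p α) (i : ι) (l : n) (y : p) :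
    (M * ((1 : Matrix n n α) ⊗ₖ K)) i (l, y) = ∑ z, M i (l, z) * K z y := by
  simp [mul_apply, Fintype.sum_prod_type, one_apply]

end Matrix

variable {𝕜 : Type*} [NontriviallyNormedField 𝕜] {ι κ μ : Type*}

-- Matrices carry no canonical norm in Mathlib, so derivatives are taken entrywise.
def HasMatrixDerivAt (A : 𝕜 → Matrix ι κ 𝕜) (A' : Matrix ι κ 𝕜) (t : 𝕜) : Prop :=
  ∀ i j, HasDerivAt (fun s => A s i j) (A' i j) t

namespace HasMatrixDerivAt

variable {t : 𝕜}

theorem sub {A B : 𝕜 → Matrix ι κ 𝕜} {A' B' : Matrix ι κ 𝕜}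
    (hA : HasMatrixDerivAt A A' t) (hB : HasMatrixDerivAt B B' t) :
    HasMatrixDerivAt (fun s => A s - B s) (A' - B') t :=
  fun i j => (hA i j).sub (hB i j)

theorem mul [Fintype κ] {A : 𝕜 → Matrix ι κ 𝕜} {B : 𝕜 → Matrix κ μ 𝕜}
    {A' : Matrix ι κ 𝕜} {B' : Matrix κ μ 𝕜}
    (hA : HasMatrixDerivAt A A' t) (hB : HasMatrixDerivAt B B' t) :
    HasMatrixDerivAt (fun s => A s * B s) (A' * B t + A t * B') t := by
  intro i j
  simp only [Matrix.mul_apply, Matrix.add_apply, ← Finset.sum_add_distrib]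
  exact HasDerivAt.fun_sum fun k _ => (hA i k).mul (hB k j)

theorem unique {A : 𝕜 → Matrix ι κ 𝕜} {A' A'' : Matrix ι κ 𝕜}
    (h' : HasMatrixDerivAt A A' t) (h'' : HasMatrixDerivAt A A'' t) : A' = A'' :=
  Matrix.ext fun i j => (h' i j).unique (h'' i j)

end HasMatrixDerivAt

section Inverse

variable [Fintype ι] [DecidableEq ι] {B : 𝕜 → Matrix ι ι 𝕜} {t : 𝕜}

theorem differentiableAt_matrix_det (hB : ∀ i j, DifferentiableAt 𝕜 (fun s => B s i j) t) :
    DifferentiableAt 𝕜 (fun s => (B s).det) t := by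
  simp only [Matrix.det_apply']
  exact DifferentiableAt.fun_sum fun σ _ =>
    (DifferentiableAt.fun_finsetProd fun i _ => hB (σ i) i).const_mul _

theorem differentiableAt_matrix_adjugate (hB : ∀ i j, DifferentiableAt 𝕜 (fun s => B s i j) t)
    (i j : ι) : DifferentiableAt 𝕜 (fun s => (B s).adjugate i j) t := by
  simp only [Matrix.adjugate_apply]
  refine differentiableAt_matrix_det fun a b => ?_
  simp only [Matrix.updateRow_apply]
  split_ifs
  · exact differentiableAt_const _
  · exact hB a b

theorem differentiableAt_matrix_inv (hB : ∀ i j, DifferentiableAt 𝕜 (fun s => B s i j) t)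
    (hu : IsUnit (B t)) (i j : ι) : DifferentiableAt 𝕜 (fun s => (B s)⁻¹ i j) t := by
  simp only [Matrix.inv_def, Matrix.smul_apply, Ring.inverse_eq_inv', smul_eq_mul]
  exact ((differentiableAt_matrix_det hB).inv ((Matrix.isUnit_iff_isUnit_det _).mp hu).ne_zero).mul
    (differentiableAt_matrix_adjugate hB i j)

-- Differentiating the identity `B⁻¹ B B⁻¹ = B⁻¹`, valid for every square matrix, avoids
-- needing `B s` to be invertible for `s ≠ t`.
theorem HasMatrixDerivAt.inv {B' : Matrix ι ι 𝕜} (hB : HasMatrixDerivAt B B' t)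
    (hu : IsUnit (B t)) :
    HasMatrixDerivAt (fun s => (B s)⁻¹) (-((B t)⁻¹ * B' * (B t)⁻¹)) t := by
  set C : Matrix ι ι 𝕜 := Matrix.of fun i j => deriv (fun s => (B s)⁻¹ i j) t
  have hC : HasMatrixDerivAt (fun s => (B s)⁻¹) C t := fun i j =>
    (differentiableAt_matrix_inv (fun a b => (hB a b).differentiableAt) hu i j).hasDerivAt
  have hdet := (Matrix.isUnit_iff_isUnit_det _).mp hu
  have hprod := (hC.mul hB).mul hC
  simp only [Matrix.nonsing_inv_mul_mul_nonsing_inv] at hprod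
  have hCeq : C = (C * B t + (B t)⁻¹ * B') * (B t)⁻¹ + (B t)⁻¹ * B t * C := hC.unique hprod
  rw [Matrix.nonsing_inv_mul _ hdet, Matrix.one_mul, Matrix.add_mul, Matrix.mul_assoc,
    Matrix.mul_nonsing_inv _ hdet, Matrix.mul_one, add_assoc, left_eq_add,
    ← neg_eq_iff_add_eq_zero] at hCeq
  rwa [hCeq]

end Inverse

section Quasideterminant

variable [Fintype κ] [DecidableEq κ] {Θ : 𝕜 → Matrix ι κ 𝕜} {Λ : 𝕜 → Matrix κ κ 𝕜} {t : 𝕜}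

theorem hasMatrixDerivAt_mul_inv_zero {D : Matrix κ κ 𝕜}
    (hΘ : HasMatrixDerivAt Θ (Θ t * D) t) (hΛ : HasMatrixDerivAt Λ (Λ t * D) t)
    (hu : IsUnit (Λ t)) : HasMatrixDerivAt (fun s => Θ s * (Λ s)⁻¹) 0 t := by
  have hdet := (Matrix.isUnit_iff_isUnit_det _).mp hu
  convert hΘ.mul (hΛ.inv hu) using 1
  rw [← Matrix.mul_assoc (Λ t)⁻¹, Matrix.nonsing_inv_mul _ hdet, Matrix.one_mul, Matrix.mul_neg,
    Matrix.mul_assoc, add_neg_cancel]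

theorem hasMatrixDerivAt_quasideterminant [Fintype μ] {a : 𝕜 → Matrix ι μ 𝕜}
    {C : 𝕜 → Matrix κ μ 𝕜} {D : Matrix κ κ 𝕜} {K : Matrix μ μ 𝕜}
    (ha : HasMatrixDerivAt a (a t * K) t)
    (hΘ : HasMatrixDerivAt Θ (Θ t * D) t) (hΛ : HasMatrixDerivAt Λ (Λ t * D) t)
    (hC : HasMatrixDerivAt C (C t * K) t) (hu : IsUnit (Λ t)) :
    HasMatrixDerivAt (fun s => a s - Θ s * (Λ s)⁻¹ * C s)
      ((a t - Θ t * (Λ t)⁻¹ * C t) * K) t := by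
  convert ha.sub ((hasMatrixDerivAt_mul_inv_zero hΘ hΛ hu).mul hC) using 1
  rw [Matrix.zero_mul, zero_add, Matrix.sub_mul, Matrix.mul_assoc _ (C t)]

end Quasideterminant

section Moments

variable {p n : ℕ} {K : Matrix (Fin p) (Fin p) ℝ} {m : ℤ → ℝ → Matrix (Fin p) (Fin p) ℝ} {t : ℝ}

theorem hasMatrixDerivAt_blockLam (hm : ∀ j, HasMatrixDerivAt (m j) (m j t * K) t) :
    HasMatrixDerivAt (fun s => blockLam p n fun j => m j s)
      (blockLam p n (fun j => m j t) * ((1 : Matrix (Fin n) (Fin n) ℝ) ⊗ₖ K)) t := by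
  rintro ⟨k, x⟩ ⟨l, y⟩
  rw [Matrix.mul_one_kronecker_apply]
  exact hm _ x y

theorem hasMatrixDerivAt_blockTheta (hm : ∀ j, HasMatrixDerivAt (m j) (m j t * K) t) :
    HasMatrixDerivAt (fun s => blockTheta p n fun j => m j s)
      (blockTheta p n (fun j => m j t) * ((1 : Matrix (Fin n) (Fin n) ℝ) ⊗ₖ K)) t := by
  rintro x ⟨l, y⟩
  rw [Matrix.mul_one_kronecker_apply]
  exact hm _ x y

theorem hasMatrixDerivAt_blockCol (r : ℤ) (hm : ∀ j, HasMatrixDerivAt (m j) (m j t * K) t) :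
    HasMatrixDerivAt (fun s => blockCol p n r fun j => m j s)
      (blockCol p n r (fun j => m j t) * K) t := by
  rintro ⟨l, x⟩ y
  exact hm _ x y

end Moments

theorem statement10_general {p : ℕ}
    (K : Matrix (Fin p) (Fin p) ℝ)
    (m : ℤ → ℝ → Matrix (Fin p) (Fin p) ℝ)
    (hm : ∀ (j : ℤ) (t : ℝ) (x y : Fin p),
      HasDerivAt (fun s => m j s x y) ((m j t * K) x y) t)
    (hΛ : ∀ n : ℕ, 1 ≤ n → ∀ t : ℝ, IsUnit (blockLam p n (fun j => m j t))) :
    ∀ n : ℕ, 1 ≤ n → ∀ (t : ℝ) (x y : Fin p),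
      HasDerivAt (fun s => Hexpr p n (fun j => m j s) x y)
        ((Hexpr p n (fun j => m j t) * K) x y) t ∧
      HasDerivAt (fun s => tauexpr p n (fun j => m j s) x y)
        ((tauexpr p n (fun j => m j t) * K) x y) t := by
  intro n hn t x y
  have hmt : ∀ j, HasMatrixDerivAt (m j) (m j t * K) t := fun j => hm j t
  have quasideterminant (a r : ℤ) := hasMatrixDerivAt_quasideterminant (hmt a)
    (hasMatrixDerivAt_blockTheta hmt) (hasMatrixDerivAt_blockLam hmt)
    (hasMatrixDerivAt_blockCol r hmt) (hΛ n hn t)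
  exact ⟨quasideterminant 0 (-n) x y, quasideterminant (n + 1) 1 x y⟩

/-- if the moments satisfy `m_j' = m_j K`, then the
quasideterminants `H_n` and `τ_n` satisfy `H_n' = H_n K` and `τ_n' = τ_n K`. -/
theorem statement10 {p : ℕ} (hp : 1 ≤ p)
    (K : Matrix (Fin p) (Fin p) ℝ)
    (m : ℤ → ℝ → Matrix (Fin p) (Fin p) ℝ)
    (hm : ∀ (j : ℤ) (t : ℝ) (x y : Fin p),
      HasDerivAt (fun s => m j s x y) ((m j t * K) x y) t)
    (hΛ : ∀ n : ℕ, 1 ≤ n → ∀ t : ℝ, IsUnit (blockLam p n (fun j => m j t))) :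
    ∀ n : ℕ, 1 ≤ n → ∀ (t : ℝ) (x y : Fin p),
      HasDerivAt (fun s => Hexpr p n (fun j => m j s) x y)
        ((Hexpr p n (fun j => m j t) * K) x y) t ∧
      HasDerivAt (fun s => tauexpr p n (fun j => m j s) x y)
        ((tauexpr p n (fun j => m j t) * K) x y) t :=
  statement10_general K m hm hΛ
end

section
/- Let N, q ≥ 1, let D ∈ Mat_{N×N}(ℝ) and K ∈ Mat_{q×q}(ℝ) be fixed matrices, and let A : ℝ → Mat_{N×N}(ℝ), B : ℝ → Mat_{N×q}(ℝ), C : ℝ → Mat_{q×N}(ℝ), d : ℝ → Mat_{q×q}(ℝ) be differentiable with A(t) invertible for all t. Suppose A′(t) = A(t)D, B′(t) = B(t)K, C′(t) = C(t)D and d′(t) = d(t)K for all t. Then the Schur complement S(t) := d(t) − C(t)A(t)^{−1}B(t) satisfies S′(t) = S(t) K for all t. -/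
/-!
Differentiating `A A⁻¹ = 1` gives `(A⁻¹)' = -A⁻¹ A' A⁻¹ = -D A⁻¹`, so
`(C A⁻¹)' = C D A⁻¹ - C D A⁻¹ = 0`. Hence `(C A⁻¹ B)' = C A⁻¹ B K`, and
`S' = d K - C A⁻¹ B K = S K`.
-/

open Matrix Filter Topology

section ProductRule

variable {l m n : Type*} [Fintype m]

theorem Matrix.hasDerivAt_mul_apply {M : ℝ → Matrix l m ℝ} {P : ℝ → Matrix m n ℝ}
    {M' : Matrix l m ℝ} {P' : Matrix m n ℝ} {t : ℝ}
    (hM : ∀ i j, HasDerivAt (fun s => M s i j) (M' i j) t)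
    (hP : ∀ i j, HasDerivAt (fun s => P s i j) (P' i j) t) (i : l) (j : n) :
    HasDerivAt (fun s => (M s * P s) i j) ((M' * P t + M t * P') i j) t := by
  simp only [mul_apply, add_apply, ← Finset.sum_add_distrib]
  exact HasDerivAt.fun_sum fun k _ => (hM i k).mul (hP k j)

end ProductRule

section Inverse

variable {n : Type*} [Fintype n] [DecidableEq n] {M : ℝ → Matrix n n ℝ} {t : ℝ}

theorem Matrix.differentiableAt_det
    (hM : ∀ i j, DifferentiableAt ℝ (fun s => M s i j) t) :
    DifferentiableAt ℝ (fun s => (M s).det) t := by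
  simp only [det_apply']
  exact DifferentiableAt.fun_sum fun σ _ =>
    (DifferentiableAt.fun_finsetProd fun i _ => hM (σ i) i).const_mul _

theorem Matrix.differentiableAt_inv_apply (hM₀ : (M t).det ≠ 0)
    (hM : ∀ i j, DifferentiableAt ℝ (fun s => M s i j) t) (i j : n) :
    DifferentiableAt ℝ (fun s => (M s)⁻¹ i j) t := by
  have hadj : DifferentiableAt ℝ (fun s => (M s).adjugate i j) t := by
    simp only [adjugate_apply]
    refine differentiableAt_det fun k l => ?_
    by_cases hk : k = j
    · simp [hk]
    · simpa [updateRow_ne hk] using hM k l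
  -- valid for all `s`, since `Matrix.inv_def` needs no invertibility
  have hinv : (fun s => (M s)⁻¹ i j) = fun s => ((M s).det)⁻¹ * (M s).adjugate i j := by
    ext s
    simp [inv_def, Ring.inverse_eq_inv']
  rw [hinv]
  exact ((differentiableAt_det hM).inv hM₀).mul hadj

theorem Matrix.hasDerivAt_inv_apply {M' : Matrix n n ℝ} (hMt : IsUnit (M t))
    (hM : ∀ i j, HasDerivAt (fun s => M s i j) (M' i j) t) (i j : n) :
    HasDerivAt (fun s => (M s)⁻¹ i j) ((-((M t)⁻¹ * M' * (M t)⁻¹)) i j) t := by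
  have hdet : (M t).det ≠ 0 := ((isUnit_iff_isUnit_det _).mp hMt).ne_zero
  have hdiff : ∀ i j, DifferentiableAt ℝ (fun s => M s i j) t :=
    fun i j => (hM i j).differentiableAt
  set F' : Matrix n n ℝ := of fun i j => deriv (fun s => (M s)⁻¹ i j) t
  have hF : ∀ i j, HasDerivAt (fun s => (M s)⁻¹ i j) (F' i j) t :=
    fun i j => (differentiableAt_inv_apply hdet hdiff i j).hasDerivAt
  have hunit : ∀ᶠ s in 𝓝 t, M s * (M s)⁻¹ = 1 :=
    ((differentiableAt_det hdiff).continuousAt.eventually_ne hdet).mono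
      fun s hs => mul_nonsing_inv _ (isUnit_iff_ne_zero.mpr hs)
  have hzero : M' * (M t)⁻¹ + M t * F' = 0 := by
    ext i j
    have hconst : HasDerivAt (fun s => (M s * (M s)⁻¹) i j) 0 t :=
      (hasDerivAt_const t ((1 : Matrix n n ℝ) i j)).congr_of_eventuallyEq
        (hunit.mono fun s hs => congrFun₂ hs i j)
    exact (hasDerivAt_mul_apply hM hF i j).unique hconst
  have hF' : F' = -((M t)⁻¹ * M' * (M t)⁻¹) := by
    calc F' = (M t)⁻¹ * (M t * F') := by
          rw [← Matrix.mul_assoc, nonsing_inv_mul _ (isUnit_iff_ne_zero.mpr hdet), Matrix.one_mul]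
      _ = _ := by
          rw [eq_neg_of_add_eq_zero_right hzero, Matrix.mul_neg, Matrix.mul_assoc]
  simpa only [hF'] using hF i j

end Inverse

theorem statement11_general {N q : ℕ}
    (D : Matrix (Fin N) (Fin N) ℝ) (K : Matrix (Fin q) (Fin q) ℝ)
    (A : ℝ → Matrix (Fin N) (Fin N) ℝ)
    (B : ℝ → Matrix (Fin N) (Fin q) ℝ)
    (C : ℝ → Matrix (Fin q) (Fin N) ℝ)
    (d : ℝ → Matrix (Fin q) (Fin q) ℝ)
    (hAinv : ∀ t : ℝ, IsUnit (A t))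
    (hA : ∀ (t : ℝ) (i j : Fin N), HasDerivAt (fun s => A s i j) ((A t * D) i j) t)
    (hB : ∀ (t : ℝ) (i : Fin N) (j : Fin q),
      HasDerivAt (fun s => B s i j) ((B t * K) i j) t)
    (hC : ∀ (t : ℝ) (i : Fin q) (j : Fin N),
      HasDerivAt (fun s => C s i j) ((C t * D) i j) t)
    (hd : ∀ (t : ℝ) (i j : Fin q), HasDerivAt (fun s => d s i j) ((d t * K) i j) t) :
    ∀ (t : ℝ) (i j : Fin q),
      HasDerivAt (fun s => (d s - C s * (A s)⁻¹ * B s) i j)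
        (((d t - C t * (A t)⁻¹ * B t) * K) i j) t := by
  intro t i j
  have hAt : (A t)⁻¹ * A t = 1 := nonsing_inv_mul _ ((isUnit_iff_isUnit_det _).mp (hAinv t))
  have hAinv' : ∀ i j, HasDerivAt (fun s => (A s)⁻¹ i j) ((-(D * (A t)⁻¹)) i j) t := by
    intro i j
    simpa only [Matrix.mul_assoc, ← Matrix.mul_assoc (A t)⁻¹, hAt, Matrix.one_mul]
      using hasDerivAt_inv_apply (hAinv t) (hA t) i j
  have hCAinv : ∀ i j,
      HasDerivAt (fun s => (C s * (A s)⁻¹) i j) ((0 : Matrix (Fin q) (Fin N) ℝ) i j) t := by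
    intro i j
    simpa only [Matrix.mul_neg, Matrix.mul_assoc, add_neg_cancel]
      using hasDerivAt_mul_apply (hC t) hAinv' i j
  have hCAinvB := hasDerivAt_mul_apply hCAinv (hB t) i j
  have hS := (hd t i j).sub hCAinvB
  rwa [Matrix.zero_mul, zero_add, ← Matrix.mul_assoc, ← Matrix.sub_apply, ← Matrix.sub_mul] at hS

/-- if `A' = AD`, `B' = BK`, `C' = CD`, `d' = dK` with `A(t)`
invertible for all `t`, then the Schur complement `S = d - C A⁻¹ B` satisfies
`S' = S K`. -/
theorem statement11 {N q : ℕ} (hN : 1 ≤ N) (hq : 1 ≤ q)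
    (D : Matrix (Fin N) (Fin N) ℝ) (K : Matrix (Fin q) (Fin q) ℝ)
    (A : ℝ → Matrix (Fin N) (Fin N) ℝ)
    (B : ℝ → Matrix (Fin N) (Fin q) ℝ)
    (C : ℝ → Matrix (Fin q) (Fin N) ℝ)
    (d : ℝ → Matrix (Fin q) (Fin q) ℝ)
    (hAinv : ∀ t : ℝ, IsUnit (A t))
    (hA : ∀ (t : ℝ) (i j : Fin N), HasDerivAt (fun s => A s i j) ((A t * D) i j) t)
    (hB : ∀ (t : ℝ) (i : Fin N) (j : Fin q),
      HasDerivAt (fun s => B s i j) ((B t * K) i j) t)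
    (hC : ∀ (t : ℝ) (i : Fin q) (j : Fin N),
      HasDerivAt (fun s => C s i j) ((C t * D) i j) t)
    (hd : ∀ (t : ℝ) (i j : Fin q), HasDerivAt (fun s => d s i j) ((d t * K) i j) t) :
    ∀ (t : ℝ) (i j : Fin q),
      HasDerivAt (fun s => (d s - C s * (A s)⁻¹ * B s) i j)
        (((d t - C t * (A t)⁻¹ * B t) * K) i j) t :=
  statement11_general D K A B C d hAinv hA hB hC hd
end

section
/- Let p ≥ 1, let a < 0 and b > 0 be real numbers, let j ∈ ℤ, and let V, C be p×p real matrices. Then the matrix-valued function λ ↦ λ^j · e^{aλ − b/λ} · V · exp((log λ)·C) is integrable on the interval (0, ∞) with respect to Lebesgue measure (entrywise, equivalently as a Bochner integral), where exp denotes the matrix exponential. -/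
/-!
Since `exp (log λ • C) = λ^C`, its norm is at most `λ^‖C‖ + λ^(-‖C‖)`, so every entry of the
integrand is dominated by `‖V‖` times a sum of two functions `λ^s e^{aλ - b/λ}`, `s ∈ ℝ`. Each of
these is integrable on `(0, ∞)`: bounding `e^{-b/λ} ≤ n! (λ/b)^n` with `n ≥ -s` removes the
singularity at `0`, leaving `λ^{s+n} e^{aλ}` with `s + n ≥ 0`, a Gamma-type integrand.
-/

open MeasureTheory Set Real
open scoped Nat

lemma exp_neg_le_factorial_div_pow {x : ℝ} (hx : 0 < x) (n : ℕ) : exp (-x) ≤ n ! / x ^ n := by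
  rw [exp_neg, ← inv_div]
  exact inv_anti₀ (by positivity) (pow_div_factorial_le_exp _ hx.le n)

lemma integrableOn_rpow_mul_exp_sub_div {a b : ℝ} (ha : a < 0) (hb : 0 < b) (s : ℝ) :
    IntegrableOn (fun l => l ^ s * exp (a * l - b / l)) (Ioi 0) := by
  obtain ⟨n, hn⟩ := exists_nat_ge (-s)
  have hdom : IntegrableOn (fun l => l ^ (s + n) * exp (a * l)) (Ioi 0) := by
    simpa only [rpow_one, neg_neg] using integrableOn_rpow_mul_exp_neg_mul_rpow (s := s + n)
      (by linarith) one_pos (neg_pos.2 ha)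
  refine (hdom.const_mul (n ! / b ^ n)).mono' ?_ ?_
  · refine ContinuousOn.aestronglyMeasurable (fun l hl => ?_) measurableSet_Ioi
    have hl0 : l ≠ 0 := (mem_Ioi.1 hl).ne'
    exact ContinuousAt.continuousWithinAt (by fun_prop (disch := simp [hl0]))
  · filter_upwards [ae_restrict_mem measurableSet_Ioi] with l (hl : 0 < l)
    rw [norm_of_nonneg (by positivity)]
    calc l ^ s * exp (a * l - b / l) = l ^ s * exp (-(b / l)) * exp (a * l) := by
          rw [mul_assoc, ← exp_add]; ring_nf
      _ ≤ l ^ s * (n ! / (b / l) ^ n) * exp (a * l) := by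
          gcongr; exact exp_neg_le_factorial_div_pow (by positivity) n
      _ = n ! / b ^ n * (l ^ (s + n) * exp (a * l)) := by
          rw [rpow_add hl, rpow_natCast, div_pow]; field_simp

section NormedAlgebra

variable {𝔸 : Type*} [NormedRing 𝔸] [NormedAlgebra ℝ 𝔸]

lemma norm_exp_le_exp_norm [NormOneClass 𝔸] (x : 𝔸) : ‖NormedSpace.exp x‖ ≤ exp ‖x‖ := by
  rw [NormedSpace.exp_eq_tsum ℝ]
  refine (norm_tsum_le_tsum_norm (NormedSpace.norm_expSeries_summable' x)).trans ?_
  rw [exp_eq_exp_ℝ, NormedSpace.exp_eq_tsum_div]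
  refine Summable.tsum_le_tsum (fun n => ?_) (NormedSpace.norm_expSeries_summable' x)
    (summable_pow_div_factorial _)
  rw [norm_smul, norm_inv, norm_natCast, div_eq_inv_mul]
  exact mul_le_mul_of_nonneg_left (norm_pow_le x n) (by positivity)

lemma norm_exp_log_smul_le [NormOneClass 𝔸] (c : 𝔸) {l : ℝ} (hl : 0 < l) :
    ‖NormedSpace.exp (log l • c)‖ ≤ l ^ ‖c‖ + l ^ (-‖c‖) := by
  calc ‖NormedSpace.exp (log l • c)‖ ≤ exp (|log l| * ‖c‖) := by
        simpa only [norm_smul, norm_eq_abs] using norm_exp_le_exp_norm (log l • c)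
    _ ≤ exp (log l * ‖c‖) + exp (log l * -‖c‖) := by
        rcases abs_cases (log l) with ⟨h, -⟩ | ⟨h, -⟩
        · rw [h]; linarith [exp_pos (log l * -‖c‖)]
        · rw [h, neg_mul, ← mul_neg]; linarith [exp_pos (log l * ‖c‖)]
    _ = l ^ ‖c‖ + l ^ (-‖c‖) := by rw [rpow_def_of_pos hl, rpow_def_of_pos hl]

theorem integrableOn_rpow_mul_exp_sub_div_smul_mul_exp_log_smul [CompleteSpace 𝔸]
    [NormOneClass 𝔸] {a b : ℝ} (ha : a < 0) (hb : 0 < b) (s : ℝ) (v c : 𝔸) :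
    IntegrableOn (fun l => (l ^ s * exp (a * l - b / l)) • (v * NormedSpace.exp (log l • c)))
      (Ioi 0) := by
  have hdom := ((integrableOn_rpow_mul_exp_sub_div ha hb (s + ‖c‖)).add
    (integrableOn_rpow_mul_exp_sub_div ha hb (s - ‖c‖))).const_mul ‖v‖
  refine hdom.mono' ?_ ?_
  · refine ContinuousOn.aestronglyMeasurable (fun l hl => ?_) measurableSet_Ioi
    have hl0 : l ≠ 0 := (mem_Ioi.1 hl).ne'
    have hexp : Continuous (NormedSpace.exp : 𝔸 → 𝔸) := by
      let := NormedAlgebra.restrictScalars ℚ ℝ 𝔸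
      exact NormedSpace.exp_continuous
    exact ContinuousAt.continuousWithinAt (by fun_prop (disch := simp [hl0]))
  · filter_upwards [ae_restrict_mem measurableSet_Ioi] with l (hl : 0 < l)
    have hf : 0 ≤ l ^ s * exp (a * l - b / l) := by positivity
    calc ‖(l ^ s * exp (a * l - b / l)) • (v * NormedSpace.exp (log l • c))‖
        ≤ l ^ s * exp (a * l - b / l) * (‖v‖ * (l ^ ‖c‖ + l ^ (-‖c‖))) := by
          rw [norm_smul, norm_of_nonneg hf]
          gcongr
          exact (norm_mul_le _ _).trans (by gcongr; exact norm_exp_log_smul_le c hl)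
      _ = ‖v‖ * (l ^ (s + ‖c‖) * exp (a * l - b / l) + l ^ (s - ‖c‖) * exp (a * l - b / l)) := by
          rw [rpow_add hl, rpow_sub hl, rpow_neg hl.le]; ring

end NormedAlgebra

theorem statement14_general {p : ℕ} (a b : ℝ) (ha : a < 0) (hb : 0 < b) (j : ℤ)
    (V C : Matrix (Fin p) (Fin p) ℝ) :
    ∀ x y : Fin p,
      IntegrableOn
        (fun l : ℝ =>
          ((l ^ j * Real.exp (a * l - b / l)) •
            (V * NormedSpace.exp ((Real.log l) • C))) x y)
        (Set.Ioi (0 : ℝ)) volume := by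
  intro x y
  have : Nonempty (Fin p) := ⟨x⟩
  -- Any submultiplicative norm with `‖1‖ = 1` works; entries are continuous linear functionals.
  let := Matrix.linftyOpNormedRing (n := Fin p) (α := ℝ)
  let := Matrix.linftyOpNormedAlgebra (n := Fin p) (R := ℝ) (α := ℝ)
  have h := integrableOn_rpow_mul_exp_sub_div_smul_mul_exp_log_smul ha hb j V C
  simp only [rpow_intCast] at h
  exact (Matrix.entryLinearMap ℝ ℝ x y).toContinuousLinearMap.integrable_comp h

/-- for `a < 0`, `b > 0`, `j ∈ ℤ` and `p×p` real matrices `V`, `C`,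
the matrix-valued function `λ ↦ λ^j e^{aλ - b/λ} V exp((log λ) C)` is integrable
(entrywise) on `(0, ∞)`. -/
theorem statement14 {p : ℕ} (hp : 1 ≤ p) (a b : ℝ) (ha : a < 0) (hb : 0 < b) (j : ℤ)
    (V C : Matrix (Fin p) (Fin p) ℝ) :
    ∀ x y : Fin p,
      IntegrableOn
        (fun l : ℝ =>
          ((l ^ j * Real.exp (a * l - b / l)) •
            (V * NormedSpace.exp ((Real.log l) • C))) x y)
        (Set.Ioi (0 : ℝ)) volume :=
  statement14_general a b ha hb j V C
end

section
/- Let α₀ ≠ 0, α₁, α₂ be real numbers with α₁/α₀ < 0 and α₂/α₀ > 0, and let V, C be p×p real matrices. For j ∈ ℤ and t ∈ ℝ define m_j(t) := ∫₀^∞ λ^j e^{jα₀t} · exp((α₁/α₀)λe^{α₀t} − (α₂/α₀)λ^{−1}e^{−α₀t}) · V · exp((log λ)·C) dλ. Then each m_j is differentiable in t and satisfies the nonisospectral moment evolution m_j′(t) = α₀ j m_j(t) + α₁ m_{j+1}(t) + α₂ m_{j−1}(t) for all j ∈ ℤ and t ∈ ℝ. -/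
open MeasureTheory

/-- The moments
`m_j(t) := ∫₀^∞ λ^j e^{jα₀t} exp((α₁/α₀)λe^{α₀t} - (α₂/α₀)λ⁻¹e^{-α₀t}) V exp((log λ) C) dλ`,
defined entrywise as a Lebesgue integral over `(0,∞)`. -/
noncomputable def momInt (p : ℕ) (α₀ α₁ α₂ : ℝ) (V C : Matrix (Fin p) (Fin p) ℝ)
    (j : ℤ) (t : ℝ) : Matrix (Fin p) (Fin p) ℝ :=
  Matrix.of fun x y =>
    ∫ l in Set.Ioi (0 : ℝ),
      ((l ^ j * Real.exp ((j : ℝ) * α₀ * t) *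
          Real.exp (α₁ / α₀ * l * Real.exp (α₀ * t) -
            α₂ / α₀ * l⁻¹ * Real.exp (-(α₀ * t)))) •
        (V * NormedSpace.exp ((Real.log l) • C))) x y

/-!
Differentiate under the integral sign. The integrand is `ρ_j(t, λ) w(λ)` with
`ρ_j(t, λ) = λ^j e^{jα₀t} exp((α₁/α₀) λ e^{α₀t} - (α₂/α₀) λ⁻¹ e^{-α₀t})` and
`w(λ) = (V exp((log λ) C))_{xy}`. Differentiating the exponent in `t` produces
`α₁ λ e^{α₀t} + α₂ λ⁻¹ e^{-α₀t}`, which shifts `ρ_j` to `α₁ ρ_{j+1} + α₂ ρ_{j-1}`, so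
`∂_t ρ_j = α₀ j ρ_j + α₁ ρ_{j+1} + α₂ ρ_{j-1}` pointwise. For the domination, `‖exp A‖ ≤ e^{‖A‖}`
bounds `|w(λ)|` by a multiple of `e^{K |log λ|} ≤ λ^K + λ^{-K}`, while for `t` in a bounded set the
signs of `α₁/α₀` and `α₂/α₀` give a uniform factor `exp(-cλ - c'/λ)` with `c, c' > 0`, which beats
every power of `λ` at both `0` and `∞`.
-/

open Set Real

theorem NormedSpace.norm_exp_le_exp_norm {𝔸 : Type*} [NormedRing 𝔸] [NormedAlgebra ℝ 𝔸]
    [NormOneClass 𝔸] [CompleteSpace 𝔸] (x : 𝔸) : ‖NormedSpace.exp x‖ ≤ Real.exp ‖x‖ := by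
  rw [NormedSpace.exp_eq_tsum ℝ, Real.exp_eq_exp_ℝ, NormedSpace.exp_eq_tsum_div]
  refine (norm_tsum_le_tsum_norm (NormedSpace.norm_expSeries_summable' x)).trans
    ((NormedSpace.norm_expSeries_summable' x).tsum_le_tsum (fun n => ?_)
      (Real.summable_pow_div_factorial ‖x‖))
  rw [norm_smul, norm_inv, Real.norm_natCast, div_eq_inv_mul]
  gcongr
  exact norm_pow_le _ n

open scoped Matrix.Norms.Operator in
theorem Matrix.norm_entry_le_linfty_opNorm {m n α : Type*} [Fintype m] [Fintype n]
    [SeminormedAddCommGroup α] (A : Matrix m n α) (i : m) (j : n) : ‖A i j‖ ≤ ‖A‖ := by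
  rw [Matrix.linfty_opNorm_def]
  exact_mod_cast (Finset.single_le_sum (fun k _ => zero_le) (Finset.mem_univ j)).trans
    (Finset.le_sup (f := fun i => ∑ k, ‖A i k‖₊) (Finset.mem_univ i))

open scoped Matrix.Norms.Operator in
theorem Matrix.exists_abs_mul_exp_smul_apply_le {n : Type*} [Fintype n] [DecidableEq n]
    [Nonempty n] (V C : Matrix n n ℝ) :
    ∃ K, ∀ (s : ℝ) (i j : n), |(V * NormedSpace.exp (s • C)) i j| ≤ K * Real.exp (K * |s|) := by
  refine ⟨max ‖V‖ ‖C‖, fun s i j => ?_⟩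
  calc |(V * NormedSpace.exp (s • C)) i j| ≤ ‖V * NormedSpace.exp (s • C)‖ := by
        simpa only [Real.norm_eq_abs] using
          Matrix.norm_entry_le_linfty_opNorm (V * NormedSpace.exp (s • C)) i j
    _ ≤ ‖V‖ * Real.exp ‖s • C‖ :=
        (norm_mul_le _ _).trans (by gcongr; exact NormedSpace.norm_exp_le_exp_norm _)
    _ ≤ max ‖V‖ ‖C‖ * Real.exp (max ‖V‖ ‖C‖ * |s|) := by
        rw [norm_smul, Real.norm_eq_abs, mul_comm |s|]
        gcongr
        · exact le_max_left _ _
        · exact le_max_right _ _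

open scoped Matrix.Norms.Operator in
theorem Matrix.continuous_mul_exp_smul_apply {n : Type*} [Fintype n] [DecidableEq n]
    (V C : Matrix n n ℝ) (i j : n) : Continuous fun s : ℝ => (V * NormedSpace.exp (s • C)) i j :=
  (continuous_const.matrix_mul (continuous_iff_continuousAt.2 fun s =>
    (hasDerivAt_exp_smul_const C s).continuousAt)).matrix_elem i j

theorem Real.exp_mul_abs_log_le {r : ℝ} {N : ℕ} (h : r ≤ N) {l : ℝ} (hl : 0 < l) :
    Real.exp (r * |Real.log l|) ≤ l ^ N + l⁻¹ ^ N := by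
  refine (Real.exp_le_exp.mpr (mul_le_mul_of_nonneg_right h (abs_nonneg _))).trans ?_
  rw [Real.exp_nat_mul]
  rcases le_or_gt 1 l with h1 | h1
  · rw [abs_of_nonneg (Real.log_nonneg h1), Real.exp_log hl]
    exact le_add_of_nonneg_right (by positivity)
  · rw [abs_of_nonpos (Real.log_nonpos hl.le h1.le), ← Real.log_inv, Real.exp_log (by positivity)]
    exact le_add_of_nonneg_left (by positivity)

theorem integrableOn_pow_add_inv_pow_mul_exp (N : ℕ) {c c' : ℝ} (hc : 0 < c) (hc' : 0 < c') :
    IntegrableOn (fun l => (l ^ N + l⁻¹ ^ N) * Real.exp (-(c * l) - c' * l⁻¹)) (Ioi 0) := by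
  have hpow : IntegrableOn (fun l : ℝ => l ^ N * Real.exp (-c * l)) (Ioi 0) := by
    simpa [Real.rpow_natCast] using
      integrableOn_rpow_mul_exp_neg_mul_rpow (s := N) (p := 1)
        (neg_one_lt_zero.trans_le N.cast_nonneg) one_pos hc
  have hg := hpow.add ((exp_neg_integrableOn_Ioi 0 hc).const_mul (N.factorial / c' ^ N))
  refine hg.mono' (by fun_prop : Measurable _).aestronglyMeasurable.restrict
    ((ae_restrict_iff' measurableSet_Ioi).mpr (ae_of_all _ fun l (hl : 0 < l) => ?_))
  have hinv : l⁻¹ ^ N * Real.exp (-(c' * l⁻¹)) ≤ N.factorial / c' ^ N := by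
    have := Real.pow_div_factorial_le_exp (x := c' * l⁻¹) (by positivity) N
    rw [Real.exp_neg, ← div_eq_mul_inv, div_le_div_iff₀ (Real.exp_pos _) (by positivity)]
    rw [mul_pow, div_le_iff₀ (by positivity)] at this
    linarith
  have hexp : Real.exp (-(c' * l⁻¹)) ≤ 1 := Real.exp_le_one_iff.mpr (neg_nonpos.mpr (by positivity))
  rw [Real.norm_eq_abs, abs_of_nonneg (by positivity), sub_eq_add_neg, Real.exp_add, add_mul,
    Pi.add_apply, neg_mul]
  calc l ^ N * (Real.exp (-(c * l)) * Real.exp (-(c' * l⁻¹)))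
        + l⁻¹ ^ N * (Real.exp (-(c * l)) * Real.exp (-(c' * l⁻¹)))
      = l ^ N * Real.exp (-(c * l)) * Real.exp (-(c' * l⁻¹))
        + l⁻¹ ^ N * Real.exp (-(c' * l⁻¹)) * Real.exp (-(c * l)) := by ring
    _ ≤ l ^ N * Real.exp (-(c * l)) * 1 + N.factorial / c' ^ N * Real.exp (-(c * l)) := by
      gcongr
    _ = _ := by rw [mul_one]

noncomputable def momDensity (α₀ α₁ α₂ : ℝ) (j : ℤ) (t l : ℝ) : ℝ :=
  l ^ j * exp (j * α₀ * t) * exp (α₁ / α₀ * l * exp (α₀ * t) - α₂ / α₀ * l⁻¹ * exp (-(α₀ * t)))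

theorem hasDerivAt_momDensity {α₀ : ℝ} (hα₀ : α₀ ≠ 0) (α₁ α₂ : ℝ) (j : ℤ) (t : ℝ) {l : ℝ}
    (hl : 0 < l) :
    HasDerivAt (fun s => momDensity α₀ α₁ α₂ j s l)
      (α₀ * j * momDensity α₀ α₁ α₂ j t l + α₁ * momDensity α₀ α₁ α₂ (j + 1) t l
        + α₂ * momDensity α₀ α₁ α₂ (j - 1) t l) t := by
  have hlin (a : ℝ) : HasDerivAt (fun s => exp (a * s)) (exp (a * t) * a) t := by
    simpa using ((hasDerivAt_id t).const_mul a).exp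
  have h := ((hlin (j * α₀)).fun_mul ((((hlin α₀).const_mul (α₁ / α₀ * l)).fun_sub
    ((hlin (-α₀)).const_mul (α₂ / α₀ * l⁻¹))).exp)).const_mul (l ^ j)
  simp only [neg_mul, ← mul_assoc] at h
  refine h.congr_deriv ?_
  simp only [momDensity, zpow_add_one₀ hl.ne', zpow_sub_one₀ hl.ne', Int.cast_add,
    Int.cast_sub, Int.cast_one, add_mul, sub_mul, one_mul, exp_add, exp_sub, exp_neg]
  field_simp
  ring

theorem measurable_momDensity (α₀ α₁ α₂ : ℝ) (j : ℤ) (t : ℝ) :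
    Measurable (momDensity α₀ α₁ α₂ j t) := by
  unfold momDensity; fun_prop

theorem momDensity_pos (α₀ α₁ α₂ : ℝ) (j : ℤ) (t : ℝ) {l : ℝ} (hl : 0 < l) :
    0 < momDensity α₀ α₁ α₂ j t l := by
  unfold momDensity; positivity

theorem momDensity_le {α₀ α₁ α₂ : ℝ} (h₁ : α₁ / α₀ ≤ 0) (h₂ : 0 ≤ α₂ / α₀) {k : ℤ} {n : ℕ}
    (hk : k.natAbs ≤ n) {t T : ℝ} (ht : |t| ≤ T) {l : ℝ} (hl : 0 < l) :
    momDensity α₀ α₁ α₂ k t l ≤ exp (n * |log l|) * exp (n * |α₀| * T) *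
      exp (α₁ / α₀ * exp (-(|α₀| * T)) * l - α₂ / α₀ * exp (-(|α₀| * T)) * l⁻¹) := by
  have hkn : |(k : ℝ)| ≤ n := by rw [← Int.cast_abs, Int.abs_eq_natAbs]; exact_mod_cast hk
  have hα₀t : |α₀ * t| ≤ |α₀| * T := by rw [abs_mul]; gcongr
  have hpos : exp (-(|α₀| * T)) ≤ exp (α₀ * t) := exp_le_exp.mpr (by linarith [neg_abs_le (α₀ * t)])
  have hneg : exp (-(|α₀| * T)) ≤ exp (-(α₀ * t)) :=
    exp_le_exp.mpr (by linarith [le_abs_self (α₀ * t)])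
  unfold momDensity
  gcongr ?_ * exp ?_ * exp ?_
  · rw [← exp_log (zpow_pos hl k), log_zpow, exp_le_exp]
    calc k * log l ≤ |(k : ℝ)| * |log l| := abs_mul (k : ℝ) (log l) ▸ le_abs_self _
      _ ≤ n * |log l| := by gcongr
  · calc k * α₀ * t = k * (α₀ * t) := mul_assoc _ _ _
      _ ≤ |(k : ℝ)| * |α₀ * t| := abs_mul (k : ℝ) _ ▸ le_abs_self _
      _ ≤ n * (|α₀| * T) := by gcongr
      _ = n * |α₀| * T := (mul_assoc _ _ _).symm
  · have := mul_le_mul_of_nonpos_left hpos (mul_nonpos_of_nonpos_of_nonneg h₁ hl.le)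
    have := mul_le_mul_of_nonneg_left hneg (mul_nonneg h₂ (inv_pos.mpr hl).le)
    linarith

theorem exists_integrableOn_bound_momDensity_mul {α₀ α₁ α₂ : ℝ} (h₁ : α₁ / α₀ < 0)
    (h₂ : 0 < α₂ / α₀) {w : ℝ → ℝ} {K : ℝ} (hw : ∀ l > 0, |w l| ≤ K * exp (K * |log l|))
    (n : ℕ) (T : ℝ) :
    ∃ g : ℝ → ℝ, IntegrableOn g (Ioi 0) ∧ ∀ k : ℤ, k.natAbs ≤ n → ∀ t, |t| ≤ T →
      ∀ l > 0, |momDensity α₀ α₁ α₂ k t l * w l| ≤ g l := by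
  set E := exp (-(|α₀| * T))
  set N := n + ⌈K⌉₊
  have hc : 0 < -(α₁ / α₀) * E := by have := exp_pos (-(|α₀| * T)); nlinarith
  have hc' : 0 < α₂ / α₀ * E := by positivity
  refine ⟨fun l => exp (n * |α₀| * T) * K *
      ((l ^ N + l⁻¹ ^ N) * exp (-(-(α₁ / α₀) * E * l) - α₂ / α₀ * E * l⁻¹)),
    ((integrableOn_pow_add_inv_pow_mul_exp N hc hc').const_mul _), fun k hk t ht l hl => ?_⟩
  have hwK := hw l hl
  have hK : 0 ≤ K * exp (K * |log l|) := (abs_nonneg _).trans hwK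
  have hlog : exp (n * |log l|) * exp (K * |log l|) ≤ l ^ N + l⁻¹ ^ N := by
    rw [← exp_add, ← add_mul]
    exact exp_mul_abs_log_le (by push_cast [N]; linarith [Nat.le_ceil K]) hl
  calc |momDensity α₀ α₁ α₂ k t l * w l| = momDensity α₀ α₁ α₂ k t l * |w l| := by
        rw [abs_mul, abs_of_pos (momDensity_pos α₀ α₁ α₂ k t hl)]
    _ ≤ exp (n * |log l|) * exp (n * |α₀| * T) * exp (α₁ / α₀ * E * l - α₂ / α₀ * E * l⁻¹) *
          (K * exp (K * |log l|)) :=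
        mul_le_mul (momDensity_le h₁.le h₂.le hk ht hl) hwK (abs_nonneg _) (by positivity)
    _ = exp (n * |α₀| * T) * K * ((exp (n * |log l|) * exp (K * |log l|)) *
          exp (-(-(α₁ / α₀) * E * l) - α₂ / α₀ * E * l⁻¹)) := by ring_nf
    _ ≤ _ := mul_le_mul_of_nonneg_left (mul_le_mul_of_nonneg_right hlog (exp_pos _).le)
        (mul_nonneg (exp_pos _).le (nonneg_of_mul_nonneg_left hK (exp_pos _)))

theorem integrableOn_momDensity_mul {α₀ α₁ α₂ : ℝ} (h₁ : α₁ / α₀ < 0) (h₂ : 0 < α₂ / α₀)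
    {w : ℝ → ℝ} (hw_meas : AEStronglyMeasurable w (volume.restrict (Ioi 0))) {K : ℝ}
    (hw : ∀ l > 0, |w l| ≤ K * exp (K * |log l|)) (k : ℤ) (t : ℝ) :
    IntegrableOn (fun l => momDensity α₀ α₁ α₂ k t l * w l) (Ioi 0) := by
  obtain ⟨g, hg, hbound⟩ := exists_integrableOn_bound_momDensity_mul h₁ h₂ hw k.natAbs |t|
  exact hg.mono' ((measurable_momDensity α₀ α₁ α₂ k t).aestronglyMeasurable.mul hw_meas)
    ((ae_restrict_iff' measurableSet_Ioi).mpr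
      (ae_of_all _ fun l hl => hbound k le_rfl t le_rfl l hl))

noncomputable def weightedMom (α₀ α₁ α₂ : ℝ) (w : ℝ → ℝ) (j : ℤ) (t : ℝ) : ℝ :=
  ∫ l in Ioi 0, momDensity α₀ α₁ α₂ j t l * w l

theorem hasDerivAt_weightedMom {α₀ α₁ α₂ : ℝ} (hα₀ : α₀ ≠ 0) (h₁ : α₁ / α₀ < 0) (h₂ : 0 < α₂ / α₀)
    {w : ℝ → ℝ} (hw_meas : AEStronglyMeasurable w (volume.restrict (Ioi 0))) {K : ℝ}
    (hw : ∀ l > 0, |w l| ≤ K * exp (K * |log l|)) (j : ℤ) (t₀ : ℝ) :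
    HasDerivAt (weightedMom α₀ α₁ α₂ w j)
      (α₀ * j * weightedMom α₀ α₁ α₂ w j t₀ + α₁ * weightedMom α₀ α₁ α₂ w (j + 1) t₀
        + α₂ * weightedMom α₀ α₁ α₂ w (j - 1) t₀) t₀ := by
  obtain ⟨g, hg, hbound⟩ :=
    exists_integrableOn_bound_momDensity_mul h₁ h₂ hw (j.natAbs + 1) (|t₀| + 1)
  set F : ℤ → ℝ → ℝ → ℝ := fun k t l => momDensity α₀ α₁ α₂ k t l * w l
  have hF_int (k : ℤ) (t : ℝ) : IntegrableOn (F k t) (Ioi 0) :=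
    integrableOn_momDensity_mul h₁ h₂ hw_meas hw k t
  have hball : ∀ t ∈ Metric.ball t₀ 1, |t| ≤ |t₀| + 1 := fun t ht => by
    have := abs_sub_abs_le_abs_sub t t₀
    rw [Metric.mem_ball, Real.dist_eq] at ht
    linarith
  have hderiv := hasDerivAt_integral_of_dominated_loc_of_deriv_le
    (F' := fun t l => α₀ * j * F j t l + α₁ * F (j + 1) t l + α₂ * F (j - 1) t l)
    (bound := fun l => (|α₀| * |(j : ℝ)| + |α₁| + |α₂|) * g l) (Metric.ball_mem_nhds t₀ one_pos)
    (Filter.Eventually.of_forall fun t => (hF_int j t).aestronglyMeasurable) (hF_int j t₀)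
    ((((hF_int j t₀).const_mul _).add ((hF_int _ t₀).const_mul _) |>.add
      ((hF_int _ t₀).const_mul _)).aestronglyMeasurable)
    ((ae_restrict_iff' measurableSet_Ioi).mpr (ae_of_all _ fun l hl t ht => by
      have hb := fun k hk => hbound k hk t (hball t ht) l hl
      calc ‖α₀ * j * F j t l + α₁ * F (j + 1) t l + α₂ * F (j - 1) t l‖
          ≤ ‖α₀ * j * F j t l‖ + ‖α₁ * F (j + 1) t l‖ + ‖α₂ * F (j - 1) t l‖ := norm_add₃_le
        _ ≤ |α₀| * |(j : ℝ)| * g l + |α₁| * g l + |α₂| * g l := by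
            simp only [Real.norm_eq_abs, abs_mul]
            gcongr
            exacts [hb j (by omega), hb (j + 1) (by omega), hb (j - 1) (by omega)]
        _ = _ := by ring))
    (hg.const_mul _)
    ((ae_restrict_iff' measurableSet_Ioi).mpr (ae_of_all _ fun l hl t _ =>
      ((hasDerivAt_momDensity hα₀ α₁ α₂ j t hl).mul_const (w l)).congr_deriv (by ring)))
  refine hderiv.2.congr_deriv ?_
  have hF₀ := (hF_int j t₀).const_mul (α₀ * j)
  have hF₁ := (hF_int (j + 1) t₀).const_mul α₁
  have hF₂ := (hF_int (j - 1) t₀).const_mul α₂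
  rw [integral_add (hF₀.fun_add hF₁) hF₂, integral_add hF₀ hF₁, integral_const_mul,
    integral_const_mul, integral_const_mul]
  rfl

theorem momInt_apply (p : ℕ) (α₀ α₁ α₂ : ℝ) (V C : Matrix (Fin p) (Fin p) ℝ) (j : ℤ) (t : ℝ)
    (x y : Fin p) :
    momInt p α₀ α₁ α₂ V C j t x y =
      weightedMom α₀ α₁ α₂ (fun l => (V * NormedSpace.exp (log l • C)) x y) j t :=
  rfl

theorem statement16_general {p : ℕ} (α₀ α₁ α₂ : ℝ) (hα₀ : α₀ ≠ 0)
    (h₁ : α₁ / α₀ < 0) (h₂ : 0 < α₂ / α₀)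
    (V C : Matrix (Fin p) (Fin p) ℝ) :
    ∀ (j : ℤ) (t : ℝ) (x y : Fin p),
      HasDerivAt (fun s => momInt p α₀ α₁ α₂ V C j s x y)
        (((α₀ * (j : ℝ)) • momInt p α₀ α₁ α₂ V C j t
          + α₁ • momInt p α₀ α₁ α₂ V C (j + 1) t
          + α₂ • momInt p α₀ α₁ α₂ V C (j - 1) t) x y) t := by
  intro j t x y
  have : Nonempty (Fin p) := ⟨x⟩
  obtain ⟨K, hK⟩ := Matrix.exists_abs_mul_exp_smul_apply_le V C
  have hw_meas : Measurable fun l => (V * NormedSpace.exp (log l • C)) x y :=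
    (Matrix.continuous_mul_exp_smul_apply V C x y).measurable.comp measurable_log
  simpa only [momInt_apply, Matrix.add_apply, Matrix.smul_apply, smul_eq_mul] using
    hasDerivAt_weightedMom hα₀ h₁ h₂ hw_meas.aestronglyMeasurable (fun l _ => hK (log l) x y) j t

/-- the moments `m_j(t)` are differentiable in `t` and satisfy the
nonisospectral moment evolution `m_j' = α₀ j m_j + α₁ m_{j+1} + α₂ m_{j-1}`. -/
theorem statement16 {p : ℕ} (hp : 1 ≤ p) (α₀ α₁ α₂ : ℝ) (hα₀ : α₀ ≠ 0)
    (h₁ : α₁ / α₀ < 0) (h₂ : 0 < α₂ / α₀)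
    (V C : Matrix (Fin p) (Fin p) ℝ) :
    ∀ (j : ℤ) (t : ℝ) (x y : Fin p),
      HasDerivAt (fun s => momInt p α₀ α₁ α₂ V C j s x y)
        (((α₀ * (j : ℝ)) • momInt p α₀ α₁ α₂ V C j t
          + α₁ • momInt p α₀ α₁ α₂ V C (j + 1) t
          + α₂ • momInt p α₀ α₁ α₂ V C (j - 1) t) x y) t :=
  statement16_general α₀ α₁ α₂ hα₀ h₁ h₂ V C
end
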